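/- arXiv:1404.2725 — 8 statements merged into one kernel-verified Lean document; each statement's English description precedes it below -/
import Mathlib

section
/- There exists T > 0, depending only on 𝒥, C, α, the functions (g_j), and ā, with the following property. Let q : [0,∞) → [0,∞)^𝒥 be locally absolutely continuous with ‖q(0)‖₁ = 1, and let s : [0,∞) → C be measurable such that for almost every t ≥ 0: s(t) maximizes Σ_{j∈𝒥} g_j(σ_j) q_j(t)^α over σ ∈ C, and for every j ∈ 𝒥 with q_j(t) > 0 the coordinate q_j is differentiable at t with q_j′(t) = ā_j − s_j(t). Then q_j(t) = 0 for every j ∈ 𝒥 and every t ≥ T. (Fluid stability of the (α,g)-switch policy.) -/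
/-!
Shift the arrival vector to `a = abar + ε • 1`, still in `C`, and weight queue `j` by
`c j = g j' (a j) > 0`. Comparing the maximiser `s t` with `a` through the tangent lines of the
concave `g j` gives the drift bound `∑ j, c j * q j ^ α * (abar j - s j) ≤ -ε * ∑ j, c j * q j ^ α`.
Hence `V = ∑ j, c j * q j ^ (1 + α)`, which is absolutely continuous, satisfies
`V' ≤ -δ * V ^ γ` a.e. with `γ = α / (1 + α) < 1`; so `V ^ (1 - γ)` decreases at a fixed positive
rate and `V` vanishes by a time that depends only on the bound `V 0 ≤ ∑ j, c j`.
-/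

open Set MeasureTheory Filter Topology

namespace AbsolutelyContinuousOnInterval

variable {a b : ℝ}

theorem congr {X : Type*} [PseudoMetricSpace X] {f g : ℝ → X}
    (hf : AbsolutelyContinuousOnInterval f a b) (hfg : EqOn f g (uIcc a b)) :
    AbsolutelyContinuousOnInterval g a b := by
  refine hf.congr' ?_
  rw [EventuallyEq, eventually_inf_principal]
  refine Eventually.of_forall fun E hE => Finset.sum_congr rfl fun i hi => ?_
  rw [hfg (hE.1 i hi).1, hfg (hE.1 i hi).2]

theorem const_add {f : ℝ → ℝ} (c : ℝ) (hf : AbsolutelyContinuousOnInterval f a b) :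
    AbsolutelyContinuousOnInterval (fun t => c + f t) a b := by
  simpa [AbsolutelyContinuousOnInterval] using hf

theorem finset_sum {ι : Type*} (s : Finset ι) {f : ι → ℝ → ℝ}
    (hf : ∀ i ∈ s, AbsolutelyContinuousOnInterval (f i) a b) :
    AbsolutelyContinuousOnInterval (fun t => ∑ i ∈ s, f i t) a b := by
  induction s using Finset.cons_induction with
  | empty => simpa [AbsolutelyContinuousOnInterval] using tendsto_const_nhds
  | cons i s hi ih =>
    simp only [Finset.sum_cons]
    exact (hf i (Finset.mem_cons_self i s)).fun_add
      (ih fun j hj => hf j (Finset.mem_cons_of_mem hj))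

theorem sub_le_integral_of_ae_deriv_le {f g : ℝ → ℝ} (hf : AbsolutelyContinuousOnInterval f a b)
    (hab : a ≤ b) (hg : IntervalIntegrable g volume a b)
    (hfg : ∀ᵐ t, t ∈ Icc a b → deriv f t ≤ g t) :
    f b - f a ≤ ∫ t in a..b, g t := by
  rw [← hf.integral_deriv_eq_sub]
  refine intervalIntegral.integral_mono_ae_restrict hab hf.intervalIntegrable_deriv hg ?_
  rwa [EventuallyLE, ae_restrict_iff' measurableSet_Icc]

theorem antitoneOn_of_ae_deriv_nonpos {f : ℝ → ℝ} (hf : AbsolutelyContinuousOnInterval f a b)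
    (hderiv : ∀ᵐ t, t ∈ Icc a b → deriv f t ≤ 0) : AntitoneOn f (Icc a b) := by
  intro s hs t ht hst
  have hsub : uIcc s t ⊆ uIcc a b := by
    rw [uIcc_of_le hst, uIcc_of_le (hs.1.trans (hst.trans ht.2))]
    exact Icc_subset_Icc hs.1 ht.2
  have := (hf.mono hsub).sub_le_integral_of_ae_deriv_le hst intervalIntegrable_const
    (by filter_upwards [hderiv] with τ h hτ using h ⟨hs.1.trans hτ.1, hτ.2.trans ht.2⟩)
  simpa using this

end AbsolutelyContinuousOnInterval

theorem LipschitzOnWith.absolutelyContinuousOnInterval_comp {X Y : Type*} [PseudoMetricSpace X]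
    [PseudoMetricSpace Y] {φ : X → Y} {K : NNReal} {s : Set X} {f : ℝ → X} {a b : ℝ}
    (hφ : LipschitzOnWith K φ s) (hf : AbsolutelyContinuousOnInterval f a b)
    (hfs : MapsTo f (uIcc a b) s) : AbsolutelyContinuousOnInterval (φ ∘ f) a b := by
  have hK : Tendsto (fun E : ℕ × (ℕ → ℝ × ℝ) =>
      (K : ℝ) * ∑ i ∈ Finset.range E.1, dist (f (E.2 i).1) (f (E.2 i).2))
      (AbsolutelyContinuousOnInterval.totalLengthFilter ⊓
        𝓟 (AbsolutelyContinuousOnInterval.disjWithin a b)) (𝓝 0) := by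
    simpa using Tendsto.const_mul (K : ℝ) hf
  refine squeeze_zero' (Eventually.of_forall fun E => Finset.sum_nonneg fun i _ => dist_nonneg)
    ?_ hK
  rw [eventually_inf_principal]
  refine Eventually.of_forall fun E hE => ?_
  rw [Finset.mul_sum]
  exact Finset.sum_le_sum fun i hi =>
    hφ.dist_le_mul _ (hfs (hE.1 i hi).1) _ (hfs (hE.1 i hi).2)

theorem ContDiffOn.absolutelyContinuousOnInterval_comp {φ f : ℝ → ℝ} {m M a b : ℝ}
    (hφ : ContDiffOn ℝ 1 φ (Icc m M)) (hf : AbsolutelyContinuousOnInterval f a b)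
    (hfs : MapsTo f (uIcc a b) (Icc m M)) : AbsolutelyContinuousOnInterval (φ ∘ f) a b := by
  obtain ⟨K, hK⟩ := hφ.exists_lipschitzOnWith one_ne_zero (convex_Icc m M) isCompact_Icc
  exact hK.absolutelyContinuousOnInterval_comp hf hfs

theorem AbsolutelyContinuousOnInterval.rpow_const {f : ℝ → ℝ} {a b p : ℝ}
    (hf : AbsolutelyContinuousOnInterval f a b) (hp : 1 ≤ p) :
    AbsolutelyContinuousOnInterval (fun t => f t ^ p) a b := by
  obtain ⟨B, hB⟩ := hf.exists_bound
  exact ContDiffOn.absolutelyContinuousOnInterval_comp (φ := fun x => x ^ p) (m := -B) (M := B)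
    (Real.contDiff_rpow_const_of_le (n := 1) (by simpa using hp)).contDiffOn hf
    fun t ht => abs_le.1 (hB t ht)

theorem AbsolutelyContinuousOnInterval.eq_zero_of_deriv_le_neg_mul_rpow {f : ℝ → ℝ} {a b : ℝ}
    (hf : AbsolutelyContinuousOnInterval f a b) (hab : a ≤ b)
    (hf_nonneg : ∀ t ∈ Icc a b, 0 ≤ f t) {δ γ : ℝ} (hδ : 0 ≤ δ) (hγ : γ < 1)
    (hderiv : ∀ᵐ t, t ∈ Icc a b → deriv f t ≤ -(δ * f t ^ γ))
    (hlong : f a ^ (1 - γ) ≤ (1 - γ) * δ * (b - a)) : f b = 0 := by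
  by_contra hne
  have hfb : 0 < f b := (hf_nonneg b ⟨hab, le_rfl⟩).lt_of_ne' hne
  have hanti : AntitoneOn f (Icc a b) := hf.antitoneOn_of_ae_deriv_nonpos <| by
    filter_upwards [hderiv] with t h ht
    have := mul_nonneg hδ (Real.rpow_nonneg (hf_nonneg t ht) γ)
    linarith [h ht]
  have hrange : MapsTo f (uIcc a b) (Icc (f b) (f a)) := fun t ht => by
    rw [uIcc_of_le hab] at ht
    exact ⟨hanti ht ⟨hab, le_rfl⟩ ht.2, hanti ⟨le_rfl, hab⟩ ht ht.1⟩
  have hW : AbsolutelyContinuousOnInterval (fun t => f t ^ (1 - γ)) a b :=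
    ContDiffOn.absolutelyContinuousOnInterval_comp (φ := fun x => x ^ (1 - γ))
      (fun x hx => (Real.contDiffAt_rpow_const_of_ne (hfb.trans_le hx.1).ne').contDiffWithinAt)
      hf hrange
  have hW_deriv : ∀ᵐ t, t ∈ Icc a b → deriv (fun t => f t ^ (1 - γ)) t ≤ -((1 - γ) * δ) := by
    filter_upwards [hderiv, hf.ae_differentiableAt] with t hdt hdiff ht
    have hft : 0 < f t := hfb.trans_le (hrange (by rwa [uIcc_of_le hab])).1
    rw [((hdiff (by rwa [uIcc_of_le hab])).hasDerivAt.rpow_const (Or.inl hft.ne')).deriv]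
    have hpow : f t ^ (1 - γ - 1) * f t ^ γ = 1 := by
      rw [← Real.rpow_add hft]; norm_num
    have key : f t ^ (1 - γ - 1) * deriv f t ≤ -δ := by
      calc f t ^ (1 - γ - 1) * deriv f t ≤ f t ^ (1 - γ - 1) * -(δ * f t ^ γ) :=
            mul_le_mul_of_nonneg_left (hdt ht) (Real.rpow_nonneg hft.le _)
        _ = -δ := by linear_combination (-δ) * hpow
    calc deriv f t * (1 - γ) * f t ^ (1 - γ - 1) = (1 - γ) * (f t ^ (1 - γ - 1) * deriv f t) := by
          ring
      _ ≤ (1 - γ) * -δ := mul_le_mul_of_nonneg_left key (sub_pos.2 hγ).le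
      _ = -((1 - γ) * δ) := by ring
  have hdecay := hW.sub_le_integral_of_ae_deriv_le hab intervalIntegrable_const hW_deriv
  rw [intervalIntegral.integral_const, smul_eq_mul] at hdecay
  linarith [Real.rpow_pos_of_pos hfb (1 - γ)]

theorem absolutelyContinuousOnInterval_of_eq_add_integral {f e : ℝ → ℝ} {T : ℝ}
    (he : IntervalIntegrable e volume 0 T)
    (hf : ∀ t ∈ uIcc 0 T, f t = f 0 + ∫ τ in (0 : ℝ)..t, e τ) :
    AbsolutelyContinuousOnInterval f 0 T :=
  ((he.absolutelyContinuousOnInterval_intervalIntegral left_mem_uIcc).const_add (f 0)).congr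
    fun t ht => (hf t ht).symm

theorem ae_hasDerivAt_of_eq_add_integral {f e : ℝ → ℝ}
    (he : ∀ t ≥ (0 : ℝ), IntervalIntegrable e volume 0 t)
    (hf : ∀ t ≥ (0 : ℝ), f t = f 0 + ∫ τ in (0 : ℝ)..t, e τ) :
    ∀ᵐ t, 0 < t → HasDerivAt f (e t) t := by
  have h := ae_all_iff.2 fun N : ℕ => (he N N.cast_nonneg).ae_hasDerivAt_integral
  filter_upwards [h] with t ht htpos
  obtain ⟨N, hN⟩ := exists_nat_gt t
  have htN : t ∈ uIcc 0 (N : ℝ) := by rw [uIcc_of_le N.cast_nonneg]; exact ⟨htpos.le, hN.le⟩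
  have hprim := (ht N htN 0 left_mem_uIcc).const_add (f 0)
  refine hprim.congr_of_eventuallyEq ?_
  filter_upwards [Ioi_mem_nhds htpos] with τ hτ using hf τ (le_of_lt hτ)

theorem ConcaveOn.le_add_deriv_mul_sub {S : Set ℝ} {g : ℝ → ℝ} (hg : ConcaveOn ℝ S g) {a x : ℝ}
    (ha : a ∈ S) (hx : x ∈ S) (hga : DifferentiableAt ℝ g a) :
    g x ≤ g a + deriv g a * (x - a) := by
  rcases lt_trichotomy x a with hxa | rfl | hax
  · have h := hg.deriv_le_slope hx ha hxa hga
    rw [slope_def_field, le_div_iff₀ (sub_pos.2 hxa)] at h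
    linarith
  · simp
  · have h := hg.slope_le_deriv ha hx hax hga
    rw [slope_def_field, div_le_iff₀ (sub_pos.2 hax)] at h
    linarith

theorem ConcaveOn.deriv_pos_of_strictMonoOn {S : Set ℝ} {g : ℝ → ℝ} (hg : ConcaveOn ℝ S g)
    (hmono : StrictMonoOn g S) {a y : ℝ} (ha : a ∈ S) (hy : y ∈ S) (hay : a < y)
    (hga : DifferentiableAt ℝ g a) : 0 < deriv g a := by
  have h := hg.slope_le_deriv ha hy hay hga
  rw [slope_def_field] at h
  exact (div_pos (sub_pos.2 (hmono ha hy hay)) (sub_pos.2 hay)).trans_le h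

theorem sum_deriv_mul_sub_nonneg_of_sum_le {J : Type*} [Fintype J] {S : Set ℝ}
    {g : J → ℝ → ℝ} (hg : ∀ j, ConcaveOn ℝ S (g j)) {a σ u : J → ℝ} (ha : ∀ j, a j ∈ S)
    (hσ : ∀ j, σ j ∈ S) (hga : ∀ j, DifferentiableAt ℝ (g j) (a j)) (hu : ∀ j, 0 ≤ u j)
    (hopt : ∑ j, g j (a j) * u j ≤ ∑ j, g j (σ j) * u j) :
    0 ≤ ∑ j, deriv (g j) (a j) * u j * (σ j - a j) := by
  have htangent : ∑ j, g j (σ j) * u j ≤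
      ∑ j, g j (a j) * u j + ∑ j, deriv (g j) (a j) * u j * (σ j - a j) := by
    rw [← Finset.sum_add_distrib]
    refine Finset.sum_le_sum fun j _ => ?_
    have := mul_le_mul_of_nonneg_right ((hg j).le_add_deriv_mul_sub (ha j) (hσ j) (hga j)) (hu j)
    linarith
  linarith

theorem exists_weights_drift_neg_of_mem_interior {J : Type*} [Fintype J] {C : Set (J → ℝ)}
    (hC_nonneg : ∀ s ∈ C, ∀ j, 0 ≤ s j) {g : J → ℝ → ℝ}
    (hg_diff : ∀ j, DifferentiableOn ℝ (g j) (Ici 0)) (hg_mono : ∀ j, StrictMonoOn (g j) (Ici 0))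
    (hg_conc : ∀ j, ConcaveOn ℝ (Ici 0) (g j)) {abar : J → ℝ} (habar_int : abar ∈ interior C)
    (habar_pos : ∀ j, 0 < abar j) :
    ∃ c : J → ℝ, (∀ j, 0 < c j) ∧ ∃ ε > 0, ∀ u σ : J → ℝ, (∀ j, 0 ≤ u j) → σ ∈ C →
      (∀ σ' ∈ C, ∑ j, g j (σ' j) * u j ≤ ∑ j, g j (σ j) * u j) →
      ∑ j, c j * u j * (abar j - σ j) ≤ -(ε * ∑ j, c j * u j) := by
  have hshift : Tendsto (fun ε : ℝ => fun j => abar j + ε) (𝓝[>] 0) (𝓝 abar) :=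
    ((continuous_pi fun j => continuous_const.add continuous_id).tendsto' 0 abar
      (by simp)).mono_left nhdsWithin_le_nhds
  obtain ⟨ε, haC, hε⟩ := ((hshift.eventually (mem_interior_iff_mem_nhds.1 habar_int)).and
    self_mem_nhdsWithin).exists
  set a : J → ℝ := fun j => abar j + ε
  have ha : ∀ j, 0 < a j := fun j => add_pos (habar_pos j) hε
  have hga : ∀ j, DifferentiableAt ℝ (g j) (a j) := fun j =>
    (hg_diff j (a j) (ha j).le).differentiableAt (Ici_mem_nhds (ha j))
  refine ⟨fun j => deriv (g j) (a j), fun j => (hg_conc j).deriv_pos_of_strictMonoOn (hg_mono j)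
    (ha j).le (le_of_lt (add_pos (ha j) one_pos)) (lt_add_one _) (hga j), ε, hε, ?_⟩
  intro u σ hu hσ hopt
  have hfoc := sum_deriv_mul_sub_nonneg_of_sum_le hg_conc (fun j => (ha j).le)
    (hC_nonneg σ hσ) hga hu (hopt a haC)
  have hsplit : ∑ j, deriv (g j) (a j) * u j * (abar j - σ j) =
      -∑ j, deriv (g j) (a j) * u j * (σ j - a j) - ε * ∑ j, deriv (g j) (a j) * u j := by
    rw [Finset.mul_sum, ← Finset.sum_neg_distrib, ← Finset.sum_sub_distrib]
    exact Finset.sum_congr rfl fun j _ => by ring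
  linarith

theorem exists_rpow_sum_mul_rpow_le {J : Type*} [Fintype J] [Nonempty J] {c : J → ℝ}
    (hc : ∀ j, 0 < c j) {α p : ℝ} (hα : 0 ≤ α) (hp : 0 < p) :
    ∃ κ > 0, ∀ w : J → ℝ, (∀ j, 0 ≤ w j) →
      (∑ j, c j * w j ^ p) ^ (α / p) ≤ κ * ∑ j, c j * w j ^ α := by
  set cmin := Finset.univ.inf' Finset.univ_nonempty c
  have hcmin : 0 < cmin := (Finset.lt_inf'_iff _).2 fun j _ => hc j
  have hcsum : 0 ≤ ∑ j, c j := Finset.sum_nonneg fun j _ => (hc j).le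
  refine ⟨(∑ j, c j) ^ (α / p) / cmin, div_pos (Real.rpow_pos_of_pos
    (Finset.sum_pos (fun j _ => hc j) Finset.univ_nonempty) _) hcmin, fun w hw => ?_⟩
  obtain ⟨j₀, -, hj₀⟩ := Finset.exists_max_image Finset.univ w Finset.univ_nonempty
  have hupper : ∑ j, c j * w j ^ p ≤ (∑ j, c j) * w j₀ ^ p := by
    rw [Finset.sum_mul]
    exact Finset.sum_le_sum fun j _ => mul_le_mul_of_nonneg_left
      (Real.rpow_le_rpow (hw j) (hj₀ j (Finset.mem_univ j)) hp.le) (hc j).le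
  have hlower : cmin * w j₀ ^ α ≤ ∑ j, c j * w j ^ α :=
    (mul_le_mul_of_nonneg_right (Finset.inf'_le c (Finset.mem_univ j₀))
      (Real.rpow_nonneg (hw j₀) α)).trans
      (Finset.single_le_sum (f := fun j => c j * w j ^ α)
        (fun j _ => mul_nonneg (hc j).le (Real.rpow_nonneg (hw j) α)) (Finset.mem_univ j₀))
  calc (∑ j, c j * w j ^ p) ^ (α / p)
      ≤ ((∑ j, c j) * w j₀ ^ p) ^ (α / p) :=
        Real.rpow_le_rpow (Finset.sum_nonneg fun j _ =>
          mul_nonneg (hc j).le (Real.rpow_nonneg (hw j) p)) hupper (div_nonneg hα hp.le)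
    _ = (∑ j, c j) ^ (α / p) * w j₀ ^ α := by
        rw [Real.mul_rpow hcsum (Real.rpow_nonneg (hw j₀) p), ← Real.rpow_mul (hw j₀),
          mul_div_cancel₀ α hp.ne']
    _ ≤ (∑ j, c j) ^ (α / p) / cmin * ∑ j, c j * w j ^ α := by
        rw [div_mul_eq_mul_div, le_div_iff₀ hcmin, mul_assoc, mul_comm (w j₀ ^ α)]
        exact mul_le_mul_of_nonneg_left hlower (Real.rpow_nonneg hcsum _)

theorem sum_mul_rpow_le_sum_of_sum_le_one {J : Type*} [Fintype J] {c w : J → ℝ}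
    (hc : ∀ j, 0 ≤ c j) (hw : ∀ j, 0 ≤ w j) (hsum : ∑ j, w j ≤ 1) {p : ℝ} (hp : 0 ≤ p) :
    ∑ j, c j * w j ^ p ≤ ∑ j, c j := by
  refine Finset.sum_le_sum fun j _ => mul_le_of_le_one_right (hc j) (Real.rpow_le_one (hw j) ?_ hp)
  exact (Finset.single_le_sum (fun j _ => hw j) (Finset.mem_univ j)).trans hsum

theorem hasDerivAt_sum_mul_rpow {J : Type*} [Fintype J] (c : J → ℝ) {f : J → ℝ → ℝ}
    {f' : J → ℝ} {p τ : ℝ} (hp : 1 ≤ p) (hf : ∀ j, HasDerivAt (f j) (f' j) τ) :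
    HasDerivAt (fun t => ∑ j, c j * f j t ^ p) (p * ∑ j, c j * f j τ ^ (p - 1) * f' j) τ := by
  rw [Finset.mul_sum]
  exact HasDerivAt.fun_sum fun j _ =>
    (((hf j).rpow_const (Or.inr hp)).const_mul (c j)).congr_deriv (by ring)

theorem exists_extinction_time_of_drift_neg {J : Type*} [Fintype J] [Nonempty J] {c : J → ℝ}
    (hc : ∀ j, 0 < c j) {ε α : ℝ} (hε : 0 < ε) (hα : 0 < α) :
    ∃ T > (0 : ℝ), ∀ q d : ℝ → J → ℝ,
      (∀ t ≥ (0 : ℝ), ∀ j, 0 ≤ q t j) →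
      (∀ j, ∀ t ≥ (0 : ℝ), IntervalIntegrable (fun τ => d τ j) volume 0 t) →
      (∀ j, ∀ t ≥ (0 : ℝ), q t j = q 0 j + ∫ τ in (0 : ℝ)..t, d τ j) →
      (∑ j, q 0 j ≤ 1) →
      (∀ᵐ t : ℝ, 0 ≤ t → ∑ j, c j * q t j ^ α * d t j ≤ -(ε * ∑ j, c j * q t j ^ α)) →
      ∀ t ≥ T, ∀ j, q t j = 0 := by
  set p := 1 + α
  have hp : 1 ≤ p := le_add_of_nonneg_right hα.le
  have hγ : α / p < 1 := (div_lt_one (by positivity)).2 (lt_one_add α)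
  obtain ⟨κ, hκ, hcomp⟩ := exists_rpow_sum_mul_rpow_le hc hα.le (by positivity : 0 < p)
  set δ := p * ε / κ
  have hδ : 0 < δ := by positivity
  have hT : 0 < (∑ j, c j) ^ (1 - α / p) / ((1 - α / p) * δ) :=
    div_pos (Real.rpow_pos_of_pos (Finset.sum_pos (fun j _ => hc j) Finset.univ_nonempty) _)
      (mul_pos (sub_pos.2 hγ) hδ)
  refine ⟨_, hT, fun q d hq hd hrep hsum hdrift t ht j => ?_⟩
  have ht0 : 0 ≤ t := hT.le.trans ht
  set V : ℝ → ℝ := fun τ => ∑ j, c j * q τ j ^ p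
  have hV_nonneg : ∀ τ ≥ 0, 0 ≤ V τ := fun τ hτ =>
    Finset.sum_nonneg fun j _ => mul_nonneg (hc j).le (Real.rpow_nonneg (hq τ hτ j) p)
  have hV_ac : AbsolutelyContinuousOnInterval V 0 t :=
    AbsolutelyContinuousOnInterval.finset_sum _ fun j _ =>
      ((absolutelyContinuousOnInterval_of_eq_add_integral (hd j t ht0) fun τ hτ =>
        hrep j τ (by rw [uIcc_of_le ht0] at hτ; exact hτ.1)).rpow_const hp).const_mul (c j)
  have hV_deriv : ∀ᵐ τ, τ ∈ Icc 0 t → deriv V τ ≤ -(δ * V τ ^ (α / p)) := by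
    have hne : ∀ᵐ τ : ℝ, τ ≠ 0 := by simp [ae_iff, measure_singleton]
    filter_upwards [hdrift, hne, ae_all_iff.2 fun j =>
      ae_hasDerivAt_of_eq_add_integral (hd j) (hrep j)] with τ hτdrift hτne hτderiv hτ
    rw [(hasDerivAt_sum_mul_rpow c hp fun j => hτderiv j (hτ.1.lt_of_ne' hτne)).deriv,
      show p - 1 = α from add_sub_cancel_left 1 α]
    have hVτ : δ * V τ ^ (α / p) ≤ p * (ε * ∑ j, c j * q τ j ^ α) := by
      calc δ * V τ ^ (α / p) ≤ δ * (κ * ∑ j, c j * q τ j ^ α) :=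
            mul_le_mul_of_nonneg_left (hcomp _ (hq τ hτ.1)) hδ.le
        _ = p * (ε * ∑ j, c j * q τ j ^ α) := by simp only [δ]; field_simp
    nlinarith [mul_le_mul_of_nonneg_left (hτdrift hτ.1) (by positivity : (0 : ℝ) ≤ p)]
  have hV0 : V 0 ^ (1 - α / p) ≤ (1 - α / p) * δ * (t - 0) := by
    calc V 0 ^ (1 - α / p) ≤ (∑ j, c j) ^ (1 - α / p) :=
          Real.rpow_le_rpow (hV_nonneg 0 le_rfl) (sum_mul_rpow_le_sum_of_sum_le_one
            (fun j => (hc j).le) (hq 0 le_rfl) hsum (by positivity)) (sub_pos.2 hγ).le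
      _ ≤ (1 - α / p) * δ * (t - 0) := by
          rwa [sub_zero, ← div_le_iff₀' (mul_pos (sub_pos.2 hγ) hδ)]
  have hVt := hV_ac.eq_zero_of_deriv_le_neg_mul_rpow ht0 (fun τ hτ => hV_nonneg τ hτ.1)
    hδ.le hγ hV_deriv hV0
  have hterm := (Finset.sum_eq_zero_iff_of_nonneg fun j _ =>
    mul_nonneg (hc j).le (Real.rpow_nonneg (hq t ht0 j) p)).1 hVt j (Finset.mem_univ j)
  exact (Real.rpow_eq_zero (hq t ht0 j) (by positivity)).1
    ((mul_eq_zero.1 hterm).resolve_left (hc j).ne')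

theorem alpha_g_switch_fluid_stability_general {J : Type} [Fintype J] [Nonempty J]
    (C : Set (J → ℝ)) (hC_nonneg : ∀ s ∈ C, ∀ j, 0 ≤ s j)
    (α : ℝ) (hα : 0 < α)
    (g : J → ℝ → ℝ)
    (hg_diff : ∀ j, DifferentiableOn ℝ (g j) (Set.Ici 0))
    (hg_mono : ∀ j, StrictMonoOn (g j) (Set.Ici 0))
    (hg_conc : ∀ j, StrictConcaveOn ℝ (Set.Ici 0) (g j))
    (abar : J → ℝ) (habar_int : abar ∈ interior C) (habar_pos : ∀ j, 0 < abar j) :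
    ∃ T > (0 : ℝ), ∀ (q d : ℝ → J → ℝ) (s : ℝ → J → ℝ),
      (∀ t ≥ (0 : ℝ), ∀ j, 0 ≤ q t j) →
      (∀ j, ∀ t ≥ (0 : ℝ), IntervalIntegrable (fun τ => d τ j) volume 0 t) →
      (∀ j, ∀ t ≥ (0 : ℝ), q t j = q 0 j + ∫ τ in (0 : ℝ)..t, d τ j) →
      (∑ j, q 0 j = 1) →
      Measurable s →
      (∀ᵐ t : ℝ, 0 ≤ t →
        s t ∈ C ∧
        (∀ σ ∈ C, ∑ j, g j (σ j) * q t j ^ α ≤ ∑ j, g j (s t j) * q t j ^ α) ∧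
        (∀ j, 0 < q t j → d t j = abar j - s t j)) →
      ∀ t ≥ T, ∀ j, q t j = 0 := by
  obtain ⟨c, hc, ε, hε, hdrift⟩ := exists_weights_drift_neg_of_mem_interior hC_nonneg hg_diff
    hg_mono (fun j => (hg_conc j).concaveOn) habar_int habar_pos
  obtain ⟨T, hT, hextinct⟩ := exists_extinction_time_of_drift_neg hc hε hα
  refine ⟨T, hT, fun q d s hq hd hrep hsum _ hae => hextinct q d hq hd hrep hsum.le ?_⟩
  filter_upwards [hae] with t ht ht0
  obtain ⟨hsC, hopt, hflow⟩ := ht ht0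
  -- where `q t j = 0` the flow `d t j` is unconstrained, but it is weighted by `0 ^ α = 0`
  have hd_eq : ∀ j, c j * q t j ^ α * d t j = c j * q t j ^ α * (abar j - s t j) := fun j => by
    rcases (hq t ht0 j).eq_or_lt with hzero | hpos
    · simp [← hzero, Real.zero_rpow hα.ne']
    · rw [hflow j hpos]
  simpa only [hd_eq] using hdrift _ (s t) (fun j => Real.rpow_nonneg (hq t ht0 j) α) hsC hopt

/-- Fluid stability of the `(α,g)`-switch policy: there is a finite time `T`,
depending only on the network data, by which every fluid model solution
starting from unit total mass has emptied. Local absolute continuity of `q`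
is expressed by writing `q` as the integral of a locally (interval-)integrable
function `d`. -/
theorem alpha_g_switch_fluid_stability {J : Type} [Fintype J] [Nonempty J]
    (C : Set (J → ℝ)) (hC_compact : IsCompact C) (hC_convex : Convex ℝ C)
    (hC_int : (interior C).Nonempty) (hC_nonneg : ∀ s ∈ C, ∀ j, 0 ≤ s j)
    (α : ℝ) (hα : 0 < α)
    (g : J → ℝ → ℝ)
    (hg_diff : ∀ j, DifferentiableOn ℝ (g j) (Set.Ici 0))
    (hg_mono : ∀ j, StrictMonoOn (g j) (Set.Ici 0))
    (hg_conc : ∀ j, StrictConcaveOn ℝ (Set.Ici 0) (g j))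
    (abar : J → ℝ) (habar_int : abar ∈ interior C) (habar_pos : ∀ j, 0 < abar j) :
    ∃ T > (0 : ℝ), ∀ (q d : ℝ → J → ℝ) (s : ℝ → J → ℝ),
      (∀ t ≥ (0 : ℝ), ∀ j, 0 ≤ q t j) →
      (∀ j, ∀ t ≥ (0 : ℝ), IntervalIntegrable (fun τ => d τ j) volume 0 t) →
      (∀ j, ∀ t ≥ (0 : ℝ), q t j = q 0 j + ∫ τ in (0 : ℝ)..t, d τ j) →
      (∑ j, q 0 j = 1) →
      Measurable s →
      (∀ᵐ t : ℝ, 0 ≤ t →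
        s t ∈ C ∧
        (∀ σ ∈ C, ∑ j, g j (σ j) * q t j ^ α ≤ ∑ j, g j (s t j) * q t j ^ α) ∧
        (∀ j, 0 < q t j → d t j = abar j - s t j)) →
      ∀ t ≥ T, ∀ j, q t j = 0 :=
  alpha_g_switch_fluid_stability_general C hC_nonneg α hα g hg_diff hg_mono hg_conc abar habar_int
    habar_pos
end

section
/- For every q ∈ [0,∞)^𝒥 with q ≠ 0 and every s* ∈ C maximizing Σ_{j∈𝒥} g_j(s_j) q_j^α over s ∈ C, one has Σ_{j∈𝒥} (ā_j − s*_j) g_j′(ρ_j) q_j^α ≤ −ε Σ_{j∈𝒥} ā_j g_j′(ρ_j) q_j^α. (Lyapunov drift inequality for the (α,g)-switch policy.) -/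
/-!
Since `ρ` lies in `C`, optimality of `s*` gives `∑ gⱼ(ρⱼ) qⱼ^α ≤ ∑ gⱼ(s*ⱼ) qⱼ^α`; the tangent-line
inequality for the concave `gⱼ` at `ρⱼ` turns this into `∑ (ρⱼ - s*ⱼ) gⱼ'(ρⱼ) qⱼ^α ≤ 0`, which is the
claim once `ρ - s*` is split as `(ā - s*) + ε ā`.
-/

open Finset

lemma ConcaveOn.le_add_mul_sub_of_hasDerivWithinAt {S : Set ℝ} {f : ℝ → ℝ} {f' x y : ℝ}
    (hf : ConcaveOn ℝ S f) (hx : x ∈ S) (hy : y ∈ S) (hf' : HasDerivWithinAt f f' S y) :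
    f x ≤ f y + f' * (x - y) := by
  rcases lt_trichotomy x y with hxy | rfl | hxy
  · have hslope := hf.le_slope_of_hasDerivWithinAt hx hy hxy hf'
    rw [slope_def_field, le_div_iff₀ (by linarith)] at hslope
    linarith
  · simp
  · have hslope := hf.slope_le_of_hasDerivWithinAt hy hx hxy hf'
    rw [slope_def_field, div_le_iff₀ (by linarith)] at hslope
    linarith

lemma sum_sub_mul_deriv_mul_nonpos_of_sum_le {ι : Type*} [Fintype ι] {S : Set ℝ}
    {f f' : ι → ℝ → ℝ} {w x y : ι → ℝ} (hf : ∀ i, ConcaveOn ℝ S (f i))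
    (hf' : ∀ i, HasDerivWithinAt (f i) (f' i (x i)) S (x i)) (hw : ∀ i, 0 ≤ w i)
    (hx : ∀ i, x i ∈ S) (hy : ∀ i, y i ∈ S)
    (hxy : ∑ i, f i (x i) * w i ≤ ∑ i, f i (y i) * w i) :
    ∑ i, (x i - y i) * f' i (x i) * w i ≤ 0 := by
  have htangent : ∑ i, f i (y i) * w i
      ≤ ∑ i, f i (x i) * w i - ∑ i, (x i - y i) * f' i (x i) * w i := by
    rw [← sum_sub_distrib]
    refine sum_le_sum fun i _ => ?_
    have := (hf i).le_add_mul_sub_of_hasDerivWithinAt (hy i) (hx i) (hf' i)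
    nlinarith [hw i]
  linarith

theorem alpha_g_switch_drift_general {J : Type} [Fintype J]
    (C : Set (J → ℝ)) (hC_nonneg : ∀ s ∈ C, ∀ j, 0 ≤ s j)
    (α : ℝ)
    (g g' : J → ℝ → ℝ)
    (hg_deriv : ∀ j, ∀ x ≥ (0 : ℝ), HasDerivWithinAt (g j) (g' j x) (Set.Ici 0) x)
    (hg_conc : ∀ j, StrictConcaveOn ℝ (Set.Ici 0) (g j))
    (abar : J → ℝ)
    (ε : ℝ) (hρ_int : (fun j => (1 + ε) * abar j) ∈ interior C)
    (q : J → ℝ) (hq : ∀ j, 0 ≤ q j)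
    (sstar : J → ℝ) (hsstar_mem : sstar ∈ C)
    (hsstar_opt : ∀ s ∈ C, ∑ j, g j (s j) * q j ^ α ≤ ∑ j, g j (sstar j) * q j ^ α) :
    ∑ j, (abar j - sstar j) * g' j ((1 + ε) * abar j) * q j ^ α
      ≤ -ε * ∑ j, abar j * g' j ((1 + ε) * abar j) * q j ^ α := by
  set ρ : J → ℝ := fun j => (1 + ε) * abar j
  have hρ_mem : ρ ∈ C := interior_subset hρ_int
  have hfirst_order : ∑ j, (ρ j - sstar j) * g' j (ρ j) * q j ^ α ≤ 0 :=
    sum_sub_mul_deriv_mul_nonpos_of_sum_le (fun j => (hg_conc j).concaveOn)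
      (fun j => hg_deriv j _ (hC_nonneg ρ hρ_mem j)) (fun j => Real.rpow_nonneg (hq j) α)
      (hC_nonneg ρ hρ_mem) (hC_nonneg sstar hsstar_mem) (hsstar_opt ρ hρ_mem)
  have hsplit : ∑ j, (ρ j - sstar j) * g' j (ρ j) * q j ^ α
      = ∑ j, (abar j - sstar j) * g' j (ρ j) * q j ^ α
        + ε * ∑ j, abar j * g' j (ρ j) * q j ^ α := by
    rw [mul_sum, ← sum_add_distrib]
    exact sum_congr rfl fun j _ => by ring
  linarith

/-- Lyapunov drift inequality for the `(α,g)`-switch policy: if `s*` maximizes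
`∑ⱼ gⱼ(sⱼ) qⱼ^α` over the capacity set `C` and `ρ = (1+ε)·ā` lies in the
interior of `C`, then
`∑ⱼ (āⱼ - s*ⱼ) gⱼ'(ρⱼ) qⱼ^α ≤ -ε ∑ⱼ āⱼ gⱼ'(ρⱼ) qⱼ^α`. -/
theorem alpha_g_switch_drift {J : Type} [Fintype J] [Nonempty J]
    (C : Set (J → ℝ)) (hC_compact : IsCompact C) (hC_convex : Convex ℝ C)
    (hC_int : (interior C).Nonempty) (hC_nonneg : ∀ s ∈ C, ∀ j, 0 ≤ s j)
    (α : ℝ) (hα : 0 < α)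
    (g g' : J → ℝ → ℝ)
    (hg_deriv : ∀ j, ∀ x ≥ (0 : ℝ), HasDerivWithinAt (g j) (g' j x) (Set.Ici 0) x)
    (hg_mono : ∀ j, StrictMonoOn (g j) (Set.Ici 0))
    (hg_conc : ∀ j, StrictConcaveOn ℝ (Set.Ici 0) (g j))
    (abar : J → ℝ) (habar_pos : ∀ j, 0 < abar j) (habar_int : abar ∈ interior C)
    (ε : ℝ) (hε : 0 < ε) (hρ_int : (fun j => (1 + ε) * abar j) ∈ interior C)
    (q : J → ℝ) (hq : ∀ j, 0 ≤ q j) (hq_ne : q ≠ 0)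
    (sstar : J → ℝ) (hsstar_mem : sstar ∈ C)
    (hsstar_opt : ∀ s ∈ C, ∑ j, g j (s j) * q j ^ α ≤ ∑ j, g j (sstar j) * q j ^ α) :
    ∑ j, (abar j - sstar j) * g' j ((1 + ε) * abar j) * q j ^ α
      ≤ -ε * ∑ j, abar j * g' j ((1 + ε) * abar j) * q j ^ α :=
  alpha_g_switch_drift_general C hC_nonneg α g g' hg_deriv hg_conc abar ε hρ_int q hq sstar
    hsstar_mem hsstar_opt
end

section
/- Let f : [0,∞) → [0,∞) be locally absolutely continuous and suppose that for almost every t ≥ 0 with f(t) > 0 one has f′(t) ≤ −c · f(t)^{α/(1+α)}. Then for every t ≥ 0, f(t) ≤ ( ( f(0)^{1/(1+α)} − c t/(1+α) )₊ )^{1+α}; in particular f(t) = 0 for all t ≥ (1+α) f(0)^{1/(1+α)} / c. -/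
/-!
The profile `G t = ((f 0) ^ (1/(1+α)) - c t/(1+α))₊ ^ (1+α)` satisfies `G 0 = f 0` and solves
`G' = -c G ^ (α/(1+α))` at every `t`: since `1 + α > 1` it is differentiable, with derivative
`0`, at its extinction time. Where `f > G ≥ 0` the hypothesis gives
`f' ≤ -c f ^ (α/(1+α)) ≤ -c G ^ (α/(1+α)) = G'` a.e., so the absolutely continuous function
`f - G` starts at `0` and cannot increase while it is positive; a continuous induction keeps it
`≤ 0`.
-/

open MeasureTheory Set

theorem nonpos_of_eq_add_integral {H e : ℝ → ℝ} {a : ℝ}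
    (he : ∀ t ≥ a, IntervalIntegrable e volume a t)
    (hH : ∀ t ≥ a, H t = H a + ∫ τ in a..t, e τ)
    (he_nonpos : ∀ᵐ t, a ≤ t → 0 < H t → e t ≤ 0) (ha : H a ≤ 0) :
    ∀ t ≥ a, H t ≤ 0 := by
  intro T hT
  have hcont : ContinuousOn H (Icc a T) := by
    have := intervalIntegral.continuousOn_primitive_interval' (he T hT) left_mem_uIcc
    rw [uIcc_of_le hT] at this
    exact (continuousOn_const.add this).congr fun t ht => hH t ht.1
  have hclosed : IsClosed ({t | H t ≤ 0} ∩ Icc a T) := by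
    rw [inter_comm]
    exact hcont.preimage_isClosed_of_isClosed isClosed_Icc isClosed_Iic
  refine IsClosed.Icc_subset_of_forall_exists_gt hclosed ha ?_ ⟨hT, le_rfl⟩
  rintro x ⟨hHx, hax, hxT⟩ y hxy
  by_contra hne
  have hpos : ∀ τ ∈ Ioc x y, 0 < H τ := fun τ hτ => not_le.1 fun h => hne ⟨τ, h, hτ⟩
  set z := min y T
  have hxz : x < z := lt_min hxy hxT
  have hz : z ∈ Ioc x y := ⟨hxz, min_le_left y T⟩
  have hincr : H z = H x + ∫ τ in x..z, e τ := by
    have := intervalIntegral.integral_interval_sub_left (he z (hax.trans hxz.le)) (he x hax)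
    linarith [hH z (hax.trans hxz.le), hH x hax]
  have hint : ∫ τ in x..z, e τ ≤ 0 := by
    rw [intervalIntegral.integral_of_le hxz.le]
    refine setIntegral_nonpos_ae measurableSet_Ioc ?_
    filter_upwards [he_nonpos] with τ hτ hτz
    exact hτ (hax.trans hτz.1.le) (hpos τ ⟨hτz.1, hτz.2.trans (min_le_left y T)⟩)
  exact (hpos z hz).not_ge (by rw [hincr]; exact add_nonpos hHx hint)

theorem le_of_eq_add_integral_of_hasDerivAt {f d G G' : ℝ → ℝ} {a : ℝ}
    (hd : ∀ t ≥ a, IntervalIntegrable d volume a t)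
    (hf : ∀ t ≥ a, f t = f a + ∫ τ in a..t, d τ)
    (hG : ∀ t ≥ a, HasDerivAt G (G' t) t)
    (hG' : ∀ t ≥ a, IntervalIntegrable G' volume a t)
    (hdG : ∀ᵐ t, a ≤ t → G t < f t → d t ≤ G' t) (ha : f a ≤ G a) :
    ∀ t ≥ a, f t ≤ G t := by
  have hG_eq : ∀ t ≥ a, G t = G a + ∫ τ in a..t, G' τ := fun t ht => by
    rw [intervalIntegral.integral_eq_sub_of_hasDerivAt
      (fun τ hτ => hG τ (uIcc_of_le ht ▸ hτ).1) (hG' t ht)]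
    ring
  have hdiff : ∀ t ≥ a, f t - G t ≤ 0 :=
    nonpos_of_eq_add_integral (fun t ht => (hd t ht).sub (hG' t ht))
      (fun t ht => by
        rw [intervalIntegral.integral_sub (hd t ht) (hG' t ht), hf t ht, hG_eq t ht]
        ring)
      (by
        filter_upwards [hdG] with t ht hat hpos
        exact sub_nonpos.2 (ht hat (sub_pos.1 hpos)))
      (sub_nonpos.2 ha)
  exact fun t ht => sub_nonpos.1 (hdiff t ht)

theorem hasDerivAt_max_zero_rpow {p : ℝ} (hp : 1 < p) (x : ℝ) :
    HasDerivAt (fun u => max u 0 ^ p) (p * max x 0 ^ (p - 1)) x := by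
  have hzero : (0 : ℝ) ^ (p - 1) = 0 := Real.zero_rpow (by linarith)
  rcases lt_trichotomy x 0 with hx | rfl | hx
  · have hloc : (fun u => max u 0 ^ p) =ᶠ[nhds x] fun _ => 0 := by
      filter_upwards [Iio_mem_nhds hx] with u hu
      rw [max_eq_right (le_of_lt hu), Real.zero_rpow (by linarith)]
    rw [max_eq_right hx.le, hzero, mul_zero]
    exact (hasDerivAt_const x 0).congr_of_eventuallyEq hloc
  · have hleft : HasDerivWithinAt (fun u : ℝ => max u 0 ^ p) 0 (Iic 0) 0 :=
      (hasDerivWithinAt_const 0 _ 0).congr (fun u hu => by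
        rw [max_eq_right hu, Real.zero_rpow (by linarith)]) (by
        rw [max_self, Real.zero_rpow (by linarith)])
    have hright : HasDerivWithinAt (fun u : ℝ => max u 0 ^ p) (p * 0 ^ (p - 1)) (Ici 0) 0 :=
      (Real.hasDerivAt_rpow_const (Or.inr hp.le)).hasDerivWithinAt.congr
        (fun u hu => by rw [max_eq_left hu]) (by rw [max_self])
    rw [hzero, mul_zero] at hright
    rw [max_self, hzero, mul_zero]
    simpa only [Iic_union_Ici, hasDerivWithinAt_univ] using hleft.union hright
  · have hloc : (fun u => max u 0 ^ p) =ᶠ[nhds x] fun u => u ^ p := by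
      filter_upwards [Ioi_mem_nhds hx] with u hu
      rw [max_eq_left (le_of_lt hu)]
    rw [max_eq_left hx.le]
    exact (Real.hasDerivAt_rpow_const (Or.inl hx.ne')).congr_of_eventuallyEq hloc

noncomputable def extinctionProfile (α c y₀ t : ℝ) : ℝ :=
  max (y₀ ^ (1 / (1 + α)) - c * t / (1 + α)) 0 ^ (1 + α)

section extinctionProfile

variable {α c y₀ t : ℝ}

theorem extinctionProfile_nonneg : 0 ≤ extinctionProfile α c y₀ t :=
  Real.rpow_nonneg (le_max_right _ _) _

theorem extinctionProfile_zero (hα : 1 + α ≠ 0) (hy₀ : 0 ≤ y₀) :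
    extinctionProfile α c y₀ 0 = y₀ := by
  rw [extinctionProfile, mul_zero, zero_div, sub_zero, max_eq_left (Real.rpow_nonneg hy₀ _),
    ← Real.rpow_mul hy₀, one_div_mul_cancel hα, Real.rpow_one]

theorem extinctionProfile_eq_zero (hα : 0 < 1 + α) (hc : 0 < c)
    (ht : (1 + α) * y₀ ^ (1 / (1 + α)) / c ≤ t) : extinctionProfile α c y₀ t = 0 := by
  have hbase : y₀ ^ (1 / (1 + α)) - c * t / (1 + α) ≤ 0 := by
    rw [div_le_iff₀ hc] at ht
    rw [sub_nonpos, le_div_iff₀ hα]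
    linarith
  rw [extinctionProfile, max_eq_right hbase, Real.zero_rpow hα.ne']

theorem hasDerivAt_extinctionProfile (hα : 0 < α) (c y₀ t : ℝ) :
    HasDerivAt (extinctionProfile α c y₀)
      (-c * extinctionProfile α c y₀ t ^ (α / (1 + α))) t := by
  have hp : 0 < 1 + α := by linarith
  have hbase :
      HasDerivAt (fun t => y₀ ^ (1 / (1 + α)) - c * t / (1 + α)) (-(c / (1 + α))) t := by
    simpa using
      ((hasDerivAt_id t).const_mul c).div_const (1 + α) |>.const_sub (y₀ ^ (1 / (1 + α)))
  refine ((hasDerivAt_max_zero_rpow (p := 1 + α) (by linarith) _).comp t hbase).congr_deriv ?_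
  rw [extinctionProfile, ← Real.rpow_mul (le_max_right _ _), mul_div_cancel₀ _ hp.ne',
    add_sub_cancel_left]
  field_simp

theorem continuous_extinctionProfile (hα : 0 < α) :
    Continuous (extinctionProfile α c y₀) :=
  continuous_iff_continuousAt.2 fun t => (hasDerivAt_extinctionProfile hα c y₀ t).continuousAt

end extinctionProfile

/-- A locally absolutely continuous nonnegative function `f` on `[0,∞)`
(written as the integral of a locally integrable function `d`) satisfying
`f' ≤ -c * f ^ (α/(1+α))` a.e. on `{f > 0}` decays to `0` in finite time. -/
theorem fluid_ode_comparison (α c : ℝ) (hα : 0 < α) (hc : 0 < c)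
    (f d : ℝ → ℝ)
    (hf_nonneg : ∀ t ≥ (0 : ℝ), 0 ≤ f t)
    (hd_int : ∀ t ≥ (0 : ℝ), IntervalIntegrable d volume 0 t)
    (hf_ac : ∀ t ≥ (0 : ℝ), f t = f 0 + ∫ τ in (0 : ℝ)..t, d τ)
    (hode : ∀ᵐ t : ℝ, 0 ≤ t → 0 < f t → d t ≤ -c * f t ^ (α / (1 + α))) :
    (∀ t ≥ (0 : ℝ), f t ≤ (max (f 0 ^ (1 / (1 + α)) - c * t / (1 + α)) 0) ^ (1 + α)) ∧
    (∀ t ≥ (1 + α) * f 0 ^ (1 / (1 + α)) / c, f t = 0) := by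
  have hp : 0 < 1 + α := by linarith
  have hβ : 0 ≤ α / (1 + α) := by positivity
  have hf0 : 0 ≤ f 0 := hf_nonneg 0 le_rfl
  set G := extinctionProfile α c (f 0)
  have hG' : Continuous fun t => -c * G t ^ (α / (1 + α)) :=
    continuous_const.mul ((continuous_extinctionProfile hα).rpow_const fun _ => Or.inr hβ)
  have hode_G : ∀ᵐ t : ℝ, 0 ≤ t → G t < f t → d t ≤ -c * G t ^ (α / (1 + α)) := by
    filter_upwards [hode] with t ht ht0 hlt
    calc d t ≤ -c * f t ^ (α / (1 + α)) := ht ht0 (extinctionProfile_nonneg.trans_lt hlt)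
      _ ≤ -c * G t ^ (α / (1 + α)) := mul_le_mul_of_nonpos_left
        (Real.rpow_le_rpow extinctionProfile_nonneg hlt.le hβ) (neg_nonpos.2 hc.le)
  have hle : ∀ t ≥ (0 : ℝ), f t ≤ G t :=
    le_of_eq_add_integral_of_hasDerivAt hd_int hf_ac
      (fun t _ => hasDerivAt_extinctionProfile hα c (f 0) t)
      (fun t _ => hG'.intervalIntegrable 0 t) hode_G
      (extinctionProfile_zero hp.ne' hf0).ge
  refine ⟨hle, fun t ht => ?_⟩
  have ht0 : 0 ≤ t := le_trans (by positivity) ht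
  exact le_antisymm ((hle t ht0).trans_eq (extinctionProfile_eq_zero hp hc ht)) (hf_nonneg t ht0)
end

section
/- Let x ∈ (0,∞)^E and set q_j = Σ_{r ∋ j} x_{jr} for each j ∈ 𝒥. Suppose σ* ∈ C has all coordinates strictly positive and maximizes Σ_{j∈𝒥} q_j log σ_j over σ ∈ C. Then the pair (σ*, γ*) with γ*_{jr} = x_{jr} σ*_j / q_j maximizes Σ_{(j,r)∈E} x_{jr} log γ_{jr} over all pairs (σ, γ) with σ ∈ C, γ ∈ (0,∞)^E and Σ_{r ∋ j} γ_{jr} = σ_j for every j ∈ 𝒥; moreover the maximal value equals Σ_{j∈𝒥} q_j log σ*_j + Σ_{(j,r)∈E} x_{jr} log( x_{jr} / q_j ). -/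
/-!
For a fixed link `j` and capacity `σ j`, maximizing `∑ᵣ x j r * log (γ j r)` subject to
`∑ᵣ γ j r = σ j` is Gibbs' inequality (from `log t ≤ t - 1`): the maximum is attained at the
proportional split `γ j r = x j r * σ j / q j` and equals `q j * log (σ j) + ∑ᵣ x j r * log (x j r / q j)`.
Summing over the links, the joint problem reduces to maximizing `∑ⱼ q j * log (σ j)` over `C`.
-/

open Real Finset

open scoped Classical

lemma mul_log_sub_mul_log_le {a b c : ℝ} (ha : 0 ≤ a) (hb : 0 < b) (hc : 0 < c) :
    a * log b - a * log c ≤ a * (b / c) - a := by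
  have h := log_le_sub_one_of_pos (div_pos hb hc)
  rw [log_div hb.ne' hc.ne'] at h
  nlinarith

section ProportionalSplit

variable {ι : Type*} {s : Finset ι} {x : ι → ℝ} {q σ : ℝ}

lemma sum_mul_div_of_sum_eq (hq : q = ∑ i ∈ s, x i) (hq₀ : q ≠ 0) :
    ∑ i ∈ s, x i * σ / q = σ := by
  rw [← Finset.sum_div, ← Finset.sum_mul, ← hq, mul_div_cancel_left₀ _ hq₀]

lemma sum_mul_log_mul_div_eq (hx : ∀ i ∈ s, 0 < x i) (hq : q = ∑ i ∈ s, x i) (hσ : 0 < σ) :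
    ∑ i ∈ s, x i * log (x i * σ / q) = q * log σ + ∑ i ∈ s, x i * log (x i / q) := by
  have hsplit : ∀ i ∈ s, x i * log (x i * σ / q) = x i * log (x i / q) + x i * log σ := by
    intro i hi
    have hq₀ : 0 < q := hq ▸ Finset.sum_pos hx ⟨i, hi⟩
    rw [mul_div_right_comm, log_mul (div_pos (hx i hi) hq₀).ne' hσ.ne', mul_add]
  rw [Finset.sum_congr rfl hsplit, Finset.sum_add_distrib, ← Finset.sum_mul, ← hq, add_comm]

lemma sum_mul_log_le_sum_mul_log_proportional {γ : ι → ℝ} (hx : ∀ i ∈ s, 0 < x i)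
    (hγ : ∀ i ∈ s, 0 < γ i) (hq : q = ∑ i ∈ s, x i) (hσ : ∑ i ∈ s, γ i = σ) :
    ∑ i ∈ s, x i * log (γ i) ≤ ∑ i ∈ s, x i * log (x i * σ / q) := by
  rcases s.eq_empty_or_nonempty with rfl | hs
  · simp
  have hq₀ : 0 < q := hq ▸ Finset.sum_pos hx hs
  have hσ₀ : 0 < σ := hσ ▸ Finset.sum_pos hγ hs
  have hterm : ∀ i ∈ s, x i * log (γ i) - x i * log (x i * σ / q) ≤ γ i * q / σ - x i := by
    intro i hi
    have hxi := hx i hi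
    calc x i * log (γ i) - x i * log (x i * σ / q)
        ≤ x i * (γ i / (x i * σ / q)) - x i :=
          mul_log_sub_mul_log_le hxi.le (hγ i hi) (by positivity)
      _ = γ i * q / σ - x i := by field_simp
  have hslack : ∑ i ∈ s, (γ i * q / σ - x i) = 0 := by
    rw [Finset.sum_sub_distrib, ← Finset.sum_div, ← Finset.sum_mul, hσ, ← hq,
      mul_div_cancel_left₀ _ hσ₀.ne', sub_self]
  have := Finset.sum_le_sum hterm
  rw [hslack, Finset.sum_sub_distrib] at this
  linarith

end ProportionalSplit

theorem proportional_fair_reduction_general {J R : Type} [Fintype J] [Fintype R]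
    (route : R → Finset J)
    (hcover : ∀ j, ∃ r, j ∈ route r)
    (C : Set (J → ℝ))
    (x : J → R → ℝ) (hx : ∀ r, ∀ j ∈ route r, 0 < x j r)
    (q : J → ℝ)
    (hq : ∀ j, q j = ∑ r ∈ Finset.univ.filter (fun r => j ∈ route r), x j r)
    (σstar : J → ℝ) (hσ_pos : ∀ j, 0 < σstar j)
    (hσ_opt : ∀ σ ∈ C, (∀ j, 0 < σ j) →
      ∑ j, q j * Real.log (σ j) ≤ ∑ j, q j * Real.log (σstar j)) :
    (∀ j, ∑ r ∈ Finset.univ.filter (fun r => j ∈ route r),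
        x j r * σstar j / q j = σstar j) ∧
    (∀ σ ∈ C, ∀ γ : J → R → ℝ, (∀ r, ∀ j ∈ route r, 0 < γ j r) →
      (∀ j, ∑ r ∈ Finset.univ.filter (fun r => j ∈ route r), γ j r = σ j) →
      ∑ j, ∑ r ∈ Finset.univ.filter (fun r => j ∈ route r),
          x j r * Real.log (γ j r)
        ≤ ∑ j, ∑ r ∈ Finset.univ.filter (fun r => j ∈ route r),
            x j r * Real.log (x j r * σstar j / q j)) ∧
    (∑ j, ∑ r ∈ Finset.univ.filter (fun r => j ∈ route r),
        x j r * Real.log (x j r * σstar j / q j)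
      = ∑ j, q j * Real.log (σstar j)
        + ∑ j, ∑ r ∈ Finset.univ.filter (fun r => j ∈ route r),
            x j r * Real.log (x j r / q j)) := by
  have hx' : ∀ j, ∀ r ∈ univ.filter (fun r => j ∈ route r), 0 < x j r :=
    fun j r hr => hx r j (mem_filter.1 hr).2
  have hlinks : ∀ j, (univ.filter fun r => j ∈ route r).Nonempty :=
    fun j => (hcover j).imp fun r hr => mem_filter.2 ⟨mem_univ r, hr⟩
  have hq_pos : ∀ j, 0 < q j := fun j => hq j ▸ sum_pos (hx' j) (hlinks j)
  have hvalue : ∀ σ : J → ℝ, (∀ j, 0 < σ j) →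
      ∑ j, ∑ r ∈ univ.filter (fun r => j ∈ route r), x j r * log (x j r * σ j / q j)
        = ∑ j, q j * log (σ j)
          + ∑ j, ∑ r ∈ univ.filter (fun r => j ∈ route r), x j r * log (x j r / q j) :=
    fun σ hσ => by
      rw [← sum_add_distrib]
      exact sum_congr rfl fun j _ => sum_mul_log_mul_div_eq (hx' j) (hq j) (hσ j)
  refine ⟨fun j => sum_mul_div_of_sum_eq (hq j) (hq_pos j).ne', ?_, hvalue σstar hσ_pos⟩
  intro σ hσC γ hγ hγσ
  have hγ' : ∀ j, ∀ r ∈ univ.filter (fun r => j ∈ route r), 0 < γ j r :=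
    fun j r hr => hγ r j (mem_filter.1 hr).2
  have hσ : ∀ j, 0 < σ j := fun j => hγσ j ▸ sum_pos (hγ' j) (hlinks j)
  calc ∑ j, ∑ r ∈ univ.filter (fun r => j ∈ route r), x j r * log (γ j r)
      ≤ ∑ j, ∑ r ∈ univ.filter (fun r => j ∈ route r), x j r * log (x j r * σ j / q j) :=
        sum_le_sum fun j _ =>
          sum_mul_log_le_sum_mul_log_proportional (hx' j) (hγ' j) (hq j) (hγσ j)
    _ = ∑ j, q j * log (σ j)
          + ∑ j, ∑ r ∈ univ.filter (fun r => j ∈ route r), x j r * log (x j r / q j) :=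
        hvalue σ hσ
    _ ≤ ∑ j, q j * log (σstar j)
          + ∑ j, ∑ r ∈ univ.filter (fun r => j ∈ route r), x j r * log (x j r / q j) :=
        add_le_add_left (hσ_opt σ hσC hσ) _
    _ = _ := (hvalue σstar hσ_pos).symm

/-- Reduction of the multiclass proportionally fair optimization to the
per-link one: if `σstar` maximizes `∑ⱼ qⱼ log σⱼ` over `C`, then the pair
`(σstar, γstar)` with `γstar j r = x j r * σstar j / q j` maximizes
`∑_{(j,r)∈E} x j r * log (γ j r)` over all feasible pairs `(σ, γ)`, and
the maximal value is `∑ⱼ qⱼ log σstarⱼ + ∑_{(j,r)∈E} x j r * log (x j r / q j)`. -/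
theorem proportional_fair_reduction {J R : Type} [Fintype J] [Fintype R]
    [Nonempty J] [Nonempty R]
    (route : R → Finset J) (hroute_ne : ∀ r, (route r).Nonempty)
    (hcover : ∀ j, ∃ r, j ∈ route r)
    (C : Set (J → ℝ)) (hC_ne : C.Nonempty)
    (x : J → R → ℝ) (hx : ∀ r, ∀ j ∈ route r, 0 < x j r)
    (q : J → ℝ)
    (hq : ∀ j, q j = ∑ r ∈ Finset.univ.filter (fun r => j ∈ route r), x j r)
    (σstar : J → ℝ) (hσ_mem : σstar ∈ C) (hσ_pos : ∀ j, 0 < σstar j)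
    (hσ_opt : ∀ σ ∈ C, (∀ j, 0 < σ j) →
      ∑ j, q j * Real.log (σ j) ≤ ∑ j, q j * Real.log (σstar j)) :
    (∀ j, ∑ r ∈ Finset.univ.filter (fun r => j ∈ route r),
        x j r * σstar j / q j = σstar j) ∧
    (∀ σ ∈ C, ∀ γ : J → R → ℝ, (∀ r, ∀ j ∈ route r, 0 < γ j r) →
      (∀ j, ∑ r ∈ Finset.univ.filter (fun r => j ∈ route r), γ j r = σ j) →
      ∑ j, ∑ r ∈ Finset.univ.filter (fun r => j ∈ route r),
          x j r * Real.log (γ j r)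
        ≤ ∑ j, ∑ r ∈ Finset.univ.filter (fun r => j ∈ route r),
            x j r * Real.log (x j r * σstar j / q j)) ∧
    (∑ j, ∑ r ∈ Finset.univ.filter (fun r => j ∈ route r),
        x j r * Real.log (x j r * σstar j / q j)
      = ∑ j, q j * Real.log (σstar j)
        + ∑ j, ∑ r ∈ Finset.univ.filter (fun r => j ∈ route r),
            x j r * Real.log (x j r / q j)) :=
  proportional_fair_reduction_general route hcover C x hx q hq σstar hσ_pos hσ_opt
end

section
/- For every x ∈ (0,∞)^E and every (j,r) ∈ E, the function H has a partial derivative with respect to the coordinate x_{jr} at the point x, and ∂H/∂x_{jr}(x) = log( x_{jr} σ*_j(q) / (q_j ā_r) ). -/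
open scoped Classical

/-- The per-link queue sizes `q j = ∑_{r ∋ j} x j r` induced by the
per-link-per-route masses `x`. -/
noncomputable def qOf {J R : Type} [Fintype R] (route : R → Finset J)
    (x : J → R → ℝ) (j : J) : ℝ :=
  ∑ r ∈ Finset.univ.filter (fun r => j ∈ route r), x j r

/-- The entropy Lyapunov function
`H(x) = ∑_{(j,r)∈E} x j r * log (x j r * σ*ⱼ(q) / (qⱼ * ā_r))`. -/
noncomputable def Hfun {J R : Type} [Fintype J] [Fintype R] (route : R → Finset J)
    (abar : R → ℝ) (sstar : (J → ℝ) → J → ℝ) (x : J → R → ℝ) : ℝ :=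
  ∑ j, ∑ r ∈ Finset.univ.filter (fun r => j ∈ route r),
    x j r * Real.log (x j r * sstar (qOf route x) j / (qOf route x j * abar r))

/-!
Along the line through `x` in the direction of the coordinate `(j₀, r₀)`, `H` splits as
`∑ x log (x / ā) - ∑ q log q + V(q)`, where `V(q) = max_{s ∈ C} ∑ q_j log s_j`.
The first two terms are elementary. `V` is a maximum of functions that are linear in `q`, so
`log σ*_{j₀}(q)` is a subgradient of `V` along the line at every point, and a subgradient that
varies continuously is the derivative (Danskin). Continuity of `σ*` comes from compactness of `C`,
uniqueness of the maximizer (strict concavity of the objective), and a uniform lower bound on the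
maximizers near `q`.
-/

open Real Filter Topology

theorem hasDerivAt_of_continuous_subgradient {f m : ℝ → ℝ} {x : ℝ} (hm : ContinuousAt m x)
    (hx : ∀ᶠ y in 𝓝 x, (y - x) * m x ≤ f y - f x)
    (hy : ∀ᶠ y in 𝓝 x, (x - y) * m y ≤ f x - f y) :
    HasDerivAt f (m x) x := by
  rw [hasDerivAt_iff_isLittleO, Asymptotics.isLittleO_iff]
  intro c hc
  have hmc : ∀ᶠ y in 𝓝 x, |m y - m x| ≤ c := by
    filter_upwards [Metric.tendsto_nhds.1 hm c hc] with y hy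
    exact (Real.dist_eq _ _ ▸ hy).le
  filter_upwards [hx, hy, hmc] with y hxy hyx hmy
  have hlow : 0 ≤ f y - f x - (y - x) * m x := by linarith
  have hupp : f y - f x - (y - x) * m x ≤ |y - x| * |m y - m x| := by
    rw [← abs_mul]; refine le_trans ?_ (le_abs_self _); linarith
  rw [Real.norm_eq_abs, Real.norm_eq_abs, smul_eq_mul, abs_of_nonneg hlow]
  calc _ ≤ |y - x| * |m y - m x| := hupp
    _ ≤ c * |y - x| := by rw [mul_comm]; exact mul_le_mul_of_nonneg_right hmy (abs_nonneg _)

theorem hasDerivAt_finset_sum_of_eq_const {ι : Type*} {s : Finset ι} {i₀ : ι} (hi₀ : i₀ ∈ s)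
    {F : ι → ℝ → ℝ} {F' x : ℝ} (hF : HasDerivAt (F i₀) F' x)
    (hconst : ∀ i ∈ s, i ≠ i₀ → ∀ y, F i y = F i x) :
    HasDerivAt (fun y => ∑ i ∈ s, F i y) F' x := by
  have hterm : ∀ i ∈ s, HasDerivAt (F i) (if i = i₀ then F' else 0) x := fun i hi => by
    split_ifs with h
    · exact h ▸ hF
    · exact (hasDerivAt_const x (F i x)).congr_of_eventuallyEq
        (Eventually.of_forall fun y => hconst i hi h y)
  simpa [Finset.sum_ite_eq', hi₀] using HasDerivAt.fun_sum hterm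

theorem hasDerivAt_sum_apply_add_single {J : Type*} [Fintype J] {F : J → ℝ → ℝ} {q : J → ℝ}
    {j₀ : J} {F' : ℝ} (hF : HasDerivAt (F j₀) F' (q j₀)) :
    HasDerivAt (fun c : ℝ => ∑ j, F j ((q + Pi.single j₀ c : J → ℝ) j)) F' 0 :=
  hasDerivAt_finset_sum_of_eq_const (Finset.mem_univ j₀)
    (by simpa using HasDerivAt.comp_const_add (q j₀) 0 (by rwa [add_zero]))
    fun j _ hj c => by simp [hj]

theorem hasDerivAt_sum_sum_ite {J R : Type*} [Fintype J] {S : J → Finset R} {G : R → ℝ → ℝ}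
    {x : J → R → ℝ} {j₀ : J} {r₀ : R} {G' : ℝ} (hr₀ : r₀ ∈ S j₀)
    (hG : HasDerivAt (G r₀) G' (x j₀ r₀)) :
    HasDerivAt (fun h => ∑ j, ∑ r ∈ S j, G r (if j = j₀ ∧ r = r₀ then h else x j r)) G'
      (x j₀ r₀) :=
  hasDerivAt_finset_sum_of_eq_const (Finset.mem_univ j₀)
    (hasDerivAt_finset_sum_of_eq_const hr₀ (by simpa using hG) fun r _ hr h => by simp [hr])
    fun j _ hj h => by simp [hj]

section LogUtility

variable {J : Type*} {C : Set (J → ℝ)} {p q s t : J → ℝ}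

theorem convex_forall_pos : Convex ℝ {t : J → ℝ | ∀ j, 0 < t j} := by
  simpa [Set.pi] using convex_pi (𝕜 := ℝ) (s := Set.univ) fun (_ : J) _ => convex_Ioi (0 : ℝ)

variable [Fintype J]

noncomputable def logUtility (q t : J → ℝ) : ℝ := ∑ j, q j * log (t j)

def IsLogUtilityMax (C : Set (J → ℝ)) (q s : J → ℝ) : Prop :=
  s ∈ C ∩ {t | ∀ j, 0 < t j} ∧ IsMaxOn (logUtility q) (C ∩ {t | ∀ j, 0 < t j}) s

theorem eventually_forall_pos (hq : ∀ j, 0 < q j) : ∀ᶠ p in 𝓝 q, ∀ j, 0 < p j :=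
  eventually_all.2 fun j => (continuous_apply j).continuousAt.eventually (lt_mem_nhds (hq j))

theorem strictConcaveOn_logUtility (hq : ∀ j, 0 < q j) :
    StrictConcaveOn ℝ {t : J → ℝ | ∀ j, 0 < t j} (logUtility q) := by
  refine ⟨convex_forall_pos, fun t ht u hu htu a b ha hb hab => ?_⟩
  obtain ⟨j, hj⟩ := Function.ne_iff.1 htu
  simp only [logUtility, smul_eq_mul, Finset.mul_sum, ← Finset.sum_add_distrib, Pi.add_apply,
    Pi.smul_apply]
  refine Finset.sum_lt_sum (fun i _ => ?_) ⟨j, Finset.mem_univ j, ?_⟩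
  · have := strictConcaveOn_log_Ioi.concaveOn.2 (ht i) (hu i) ha.le hb.le hab
    simp only [smul_eq_mul] at this
    nlinarith [hq i]
  · have := strictConcaveOn_log_Ioi.2 (ht j) (hu j) hj ha hb hab
    simp only [smul_eq_mul] at this
    nlinarith [hq j]

theorem IsLogUtilityMax.eq (hC : Convex ℝ C) (hq : ∀ j, 0 < q j) (hs : IsLogUtilityMax C q s)
    (ht : IsLogUtilityMax C q t) : s = t :=
  ((strictConcaveOn_logUtility hq).subset Set.inter_subset_right
    (hC.inter convex_forall_pos)).eq_of_isMaxOn hs.2 ht.2 hs.1 ht.1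

theorem IsLogUtilityMax.sum_sub_mul_log_le {p' t : J → ℝ} (hs : IsLogUtilityMax C p s)
    (ht : IsLogUtilityMax C p' t) :
    ∑ j, (p' j - p j) * log (s j) ≤ logUtility p' t - logUtility p s := by
  have : logUtility p' s ≤ logUtility p' t := ht.2 hs.1
  simp only [logUtility] at this ⊢
  simp only [sub_mul, Finset.sum_sub_distrib]
  linarith

theorem tendsto_logUtility {α : Type*} {l : Filter α} {p σ : α → J → ℝ} (hp : Tendsto p l (𝓝 q))
    (hσ : Tendsto σ l (𝓝 s)) (hs : ∀ j, s j ≠ 0) :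
    Tendsto (fun a => logUtility (p a) (σ a)) l (𝓝 (logUtility q s)) :=
  tendsto_finsetSum _ fun j _ => (tendsto_pi_nhds.1 hp j).mul
    ((continuousAt_log (hs j)).tendsto.comp (tendsto_pi_nhds.1 hσ j))

theorem IsLogUtilityMax.of_tendsto {α : Type*} {l : Filter α} [l.NeBot] {p σ : α → J → ℝ}
    (hC : IsClosed C) (hp : Tendsto p l (𝓝 q)) (hσ : Tendsto σ l (𝓝 s)) (hs : ∀ j, 0 < s j)
    (hmax : ∀ᶠ a in l, IsLogUtilityMax C (p a) (σ a)) : IsLogUtilityMax C q s := by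
  refine ⟨⟨hC.mem_of_tendsto hσ (hmax.mono fun a ha => ha.1.1), hs⟩, fun t ht => ?_⟩
  exact le_of_tendsto_of_tendsto (tendsto_logUtility hp tendsto_const_nhds fun j => (ht.2 j).ne')
    (tendsto_logUtility hp hσ fun j => (hs j).ne') (hmax.mono fun a ha => ha.2 ht)

theorem IsLogUtilityMax.sum_mul_log_div_le {M : ℝ} (hM : ∀ u ∈ C, ∀ j, u j ≤ M)
    (hp : ∀ j, 0 ≤ p j) (hs : IsLogUtilityMax C p s) (ht : t ∈ C ∩ {t | ∀ j, 0 < t j}) (j : J) :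
    ∑ i, p i * log (t i / M) ≤ p j * log (s j / M) := by
  have hM0 : 0 < M := (hs.1.2 j).trans_le (hM s hs.1.1 j)
  have hnorm : ∀ u ∈ C ∩ {t | ∀ j, 0 < t j},
      ∑ i, p i * log (u i / M) = logUtility p u - (∑ i, p i) * log M := fun u hu => by
    simp only [logUtility, Finset.sum_mul, ← Finset.sum_sub_distrib, ← mul_sub]
    exact Finset.sum_congr rfl fun i _ => by rw [log_div (hu.2 i).ne' hM0.ne']
  have hnonpos : ∀ i, p i * log (s i / M) ≤ 0 := fun i =>
    mul_nonpos_of_nonneg_of_nonpos (hp i)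
      (log_nonpos (div_nonneg (hs.1.2 i).le hM0.le) ((div_le_one hM0).2 (hM s hs.1.1 i)))
  calc ∑ i, p i * log (t i / M) ≤ ∑ i, p i * log (s i / M) := by
        have hts : logUtility p t ≤ logUtility p s := hs.2 ht
        rw [hnorm t ht, hnorm s hs.1]; linarith
    _ ≤ p j * log (s j / M) := by
        rw [← Finset.add_sum_erase _ _ (Finset.mem_univ j)]
        linarith [Finset.sum_nonpos fun i (_ : i ∈ Finset.univ.erase j) => hnonpos i]

variable {σ : (J → ℝ) → J → ℝ}

/- Normalised by an upper bound `M` of `C`, every term of the objective is nonpositive, so one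
term alone dominates the optimal value, which is bounded below through the competitor `σ q`. -/
theorem exists_pos_eventually_le_of_isLogUtilityMax (hC : IsCompact C)
    (hσ : ∀ p, (∀ j, 0 < p j) → IsLogUtilityMax C p (σ p)) (hq : ∀ j, 0 < q j) (j : J) :
    ∃ δ > 0, ∀ᶠ p in 𝓝 q, δ ≤ σ p j := by
  obtain ⟨M, hM⟩ := hC.exists_bound_of_continuousOn continuousOn_id
  have hMC : ∀ u ∈ C, ∀ i, u i ≤ M := fun u hu i =>
    (le_abs_self _).trans ((norm_le_pi_norm u i).trans (hM u hu))
  have hσq := hσ q hq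
  have hM0 : 0 < M := (hσq.1.2 j).trans_le (hMC _ hσq.1.1 j)
  have hlog_nonpos : ∀ u ∈ C, ∀ i, 0 < u i → log (u i / M) ≤ 0 := fun u hu i hui =>
    log_nonpos (div_pos hui hM0).le ((div_le_one hM0).2 (hMC u hu i))
  set K := ∑ i, (q i + 1) * log (σ q i / M)
  refine ⟨M * exp (2 * K / q j), by positivity, ?_⟩
  have hnear : ∀ᶠ p in 𝓝 q, ∀ i, q i / 2 < p i ∧ p i < q i + 1 :=
    eventually_all.2 fun i => (continuous_apply i).continuousAt.eventually
      (Ioo_mem_nhds (by linarith [hq i]) (by linarith))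
  filter_upwards [hnear] with p hp
  have hppos : ∀ i, 0 < p i := fun i => (half_pos (hq i)).trans (hp i).1
  have hσp := hσ p hppos
  have hK : K ≤ ∑ i, p i * log (σ q i / M) := Finset.sum_le_sum fun i _ =>
    mul_le_mul_of_nonpos_right (hp i).2.le (hlog_nonpos _ hσq.1.1 i (hσq.1.2 i))
  have hmax := hσp.sum_mul_log_div_le hMC (fun i => (hppos i).le) hσq.1 j
  have hLj := hlog_nonpos _ hσp.1.1 j (hσp.1.2 j)
  have hlog : 2 * K / q j ≤ log (σ p j / M) := by
    rw [div_le_iff₀ (hq j)]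
    nlinarith [mul_le_mul_of_nonpos_right (hp j).1.le hLj]
  have := (le_log_iff_exp_le (div_pos (hσp.1.2 j) hM0)).1 hlog
  rwa [le_div_iff₀ hM0, mul_comm] at this

theorem continuousAt_of_isLogUtilityMax (hC : IsCompact C) (hCc : Convex ℝ C)
    (hσ : ∀ p, (∀ j, 0 < p j) → IsLogUtilityMax C p (σ p)) (hq : ∀ j, 0 < q j) :
    ContinuousAt σ q := by
  rw [ContinuousAt, Filter.tendsto_iff_ultrafilter]
  intro U hU
  have hmaxU : ∀ᶠ p in (U : Filter (J → ℝ)), IsLogUtilityMax C p (σ p) :=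
    hU ((eventually_forall_pos hq).mono hσ)
  obtain ⟨s, -, hs⟩ := isCompact_iff_ultrafilter_le_nhds.1 hC (U.map σ)
    (le_principal_iff.2 (hmaxU.mono fun p hp => hp.1.1))
  have hspos : ∀ j, 0 < s j := fun j => by
    obtain ⟨δ, hδ, hle⟩ := exists_pos_eventually_le_of_isLogUtilityMax hC hσ hq j
    exact hδ.trans_le (ge_of_tendsto ((continuous_apply j).continuousAt.tendsto.comp hs) (hU hle))
  rwa [(hσ q hq).eq hCc hq (IsLogUtilityMax.of_tendsto hC.isClosed hU hs hspos hmaxU)]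

theorem hasDerivAt_logUtility_add_single (hC : IsCompact C) (hCc : Convex ℝ C)
    (hσ : ∀ p, (∀ j, 0 < p j) → IsLogUtilityMax C p (σ p)) (hq : ∀ j, 0 < q j) (j₀ : J) :
    HasDerivAt (fun c => logUtility (q + Pi.single j₀ c) (σ (q + Pi.single j₀ c)))
      (log (σ q j₀)) 0 := by
  set L : ℝ → J → ℝ := fun c => q + Pi.single j₀ c
  have hL : Tendsto L (𝓝 0) (𝓝 q) := by
    have : Continuous L := continuous_const.add (continuous_single (A := fun _ : J => ℝ) j₀)
    simpa [L] using this.tendsto 0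
  have hLpos : ∀ᶠ c in 𝓝 0, ∀ j, 0 < L c j := hL.eventually (eventually_forall_pos hq)
  have hL0 : L 0 = q := by simp [L]
  have hsub : ∀ c c', (∀ j, 0 < L c j) → (∀ j, 0 < L c' j) →
      (c' - c) * log (σ (L c) j₀) ≤ logUtility (L c') (σ (L c')) - logUtility (L c) (σ (L c)) := by
    intro c c' hc hc'
    have hline : ∑ j, (L c' j - L c j) * log (σ (L c) j) = (c' - c) * log (σ (L c) j₀) := by
      simp [L, Pi.single_apply, ite_sub_ite]
    rw [← hline]
    exact (hσ _ hc).sum_sub_mul_log_le (hσ _ hc')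
  have hm : ContinuousAt (fun c => log (σ (L c) j₀)) 0 := by
    have := (continuousAt_log ((hσ q hq).1.2 j₀).ne').tendsto.comp
      ((continuous_apply j₀).continuousAt.tendsto.comp
        ((continuousAt_of_isLogUtilityMax hC hCc hσ hq).tendsto.comp hL))
    rwa [ContinuousAt, hL0]
  have := hasDerivAt_of_continuous_subgradient hm
    (hLpos.mono fun c hc => hsub 0 c (hL0 ▸ hq) hc) (hLpos.mono fun c hc => hsub c 0 hc (hL0 ▸ hq))
  rwa [hL0] at this

end LogUtility

theorem isLogUtilityMax_of_filter_pos {J : Type*} [Fintype J] {C : Set (J → ℝ)} {q s : J → ℝ}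
    (hq : ∀ j, 0 < q j) (hsC : s ∈ C) (hs : ∀ j, 0 < q j → 0 < s j)
    (hmax : ∀ t ∈ C, (∀ j, 0 < q j → 0 < t j) →
      ∑ j ∈ Finset.univ.filter (fun j => 0 < q j), q j * log (t j)
        ≤ ∑ j ∈ Finset.univ.filter (fun j => 0 < q j), q j * log (s j)) :
    IsLogUtilityMax C q s := by
  have hfilter : Finset.univ.filter (fun j => 0 < q j) = Finset.univ :=
    Finset.filter_true_of_mem fun j _ => hq j
  refine ⟨⟨hsC, fun j => hs j (hq j)⟩, fun t ht => ?_⟩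
  simpa [hfilter, logUtility] using hmax t ht.1 fun j _ => ht.2 j

section Routes

variable {J R : Type} [Fintype R] {route : R → Finset J} {x : J → R → ℝ}

theorem qOf_pos (hcover : ∀ j, ∃ r, j ∈ route r) (hx : ∀ r, ∀ j ∈ route r, 0 < x j r) (j : J) :
    0 < qOf route x j := by
  obtain ⟨r, hr⟩ := hcover j
  exact Finset.sum_pos (fun r' hr' => hx r' j (Finset.mem_filter.1 hr').2)
    ⟨r, Finset.mem_filter.2 ⟨Finset.mem_univ r, hr⟩⟩

theorem qOf_ite {j₀ : J} {r₀ : R} (hj₀ : j₀ ∈ route r₀) (h : ℝ) :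
    qOf route (fun j r => if j = j₀ ∧ r = r₀ then h else x j r)
      = qOf route x + Pi.single j₀ (h - x j₀ r₀) := by
  funext j
  by_cases hj : j = j₀
  · subst hj
    have hsplit : ∀ r, (if r = r₀ then h else x j r)
        = x j r + if r = r₀ then h - x j r₀ else 0 := fun r => by
      split_ifs with hr <;> simp [hr]
    simp [qOf, hsplit, Finset.sum_add_distrib, hj₀]
  · simp [qOf, hj]

theorem Hfun_eq_of_pos [Fintype J] {abar : R → ℝ} {sstar : (J → ℝ) → J → ℝ}
    (habar : ∀ r, 0 < abar r) (hx : ∀ r, ∀ j ∈ route r, 0 < x j r)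
    (hq : ∀ j, 0 < qOf route x j) (hσ : ∀ j, 0 < sstar (qOf route x) j) :
    Hfun route abar sstar x
      = ∑ j, ∑ r ∈ Finset.univ.filter (fun r => j ∈ route r),
          (x j r * log (x j r) - x j r * log (abar r))
        + logUtility (qOf route x) (sstar (qOf route x))
        - ∑ j, qOf route x j * log (qOf route x j) := by
  have hterm : ∀ j, ∀ r ∈ Finset.univ.filter (fun r => j ∈ route r),
      x j r * log (x j r * sstar (qOf route x) j / (qOf route x j * abar r))
        = (x j r * log (x j r) - x j r * log (abar r))
          + x j r * (log (sstar (qOf route x) j) - log (qOf route x j)) := fun j r hr => by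
    have hxr := hx r j (Finset.mem_filter.1 hr).2
    rw [log_div (by have := hσ j; positivity) (by have := hq j; have := habar r; positivity),
      log_mul hxr.ne' (hσ j).ne', log_mul (hq j).ne' (habar r).ne']
    ring
  simp only [Hfun, logUtility, Finset.sum_congr rfl fun j _ => Finset.sum_congr rfl (hterm j),
    Finset.sum_add_distrib, ← Finset.sum_mul]
  simp only [qOf, mul_sub, Finset.sum_sub_distrib]
  ring

end Routes

theorem H_partial_deriv_general {J R : Type} [Fintype J] [Fintype R]
    (route : R → Finset J)
    (hcover : ∀ j, ∃ r, j ∈ route r)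
    (abar : R → ℝ) (habar_pos : ∀ r, 0 < abar r)
    (C : Set (J → ℝ)) (hC_compact : IsCompact C) (hC_convex : Convex ℝ C)
    (sstar : (J → ℝ) → J → ℝ)
    (hsstar : ∀ q : J → ℝ, (∀ j, 0 ≤ q j) → q ≠ 0 →
      sstar q ∈ C ∧ (∀ j, 0 < q j → 0 < sstar q j) ∧
      ∀ s ∈ C, (∀ j, 0 < q j → 0 < s j) →
        ∑ j ∈ Finset.univ.filter (fun j => 0 < q j), q j * Real.log (s j)
          ≤ ∑ j ∈ Finset.univ.filter (fun j => 0 < q j), q j * Real.log (sstar q j))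
    (x : J → R → ℝ) (hx : ∀ r, ∀ j ∈ route r, 0 < x j r)
    (j₀ : J) (r₀ : R) (hj₀ : j₀ ∈ route r₀) :
    HasDerivAt
      (fun h : ℝ =>
        Hfun route abar sstar (fun j r => if j = j₀ ∧ r = r₀ then h else x j r))
      (Real.log (x j₀ r₀ * sstar (qOf route x) j₀ / (qOf route x j₀ * abar r₀)))
      (x j₀ r₀) := by
  have hx₀ : 0 < x j₀ r₀ := hx r₀ j₀ hj₀
  have hq : ∀ j, 0 < qOf route x j := qOf_pos hcover hx
  have hmax : ∀ p, (∀ j, 0 < p j) → IsLogUtilityMax C p (sstar p) := fun p hp =>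
    have ⟨hpC, hpos, hle⟩ := hsstar p (fun j => (hp j).le) fun h0 => (hp j₀).ne' (congrFun h0 j₀)
    isLogUtilityMax_of_filter_pos hp hpC hpos hle
  have hσ : 0 < sstar (qOf route x) j₀ := (hmax _ hq).1.2 j₀
  have hA := hasDerivAt_sum_sum_ite (G := fun r y => y * log y - y * log (abar r)) (x := x)
    (S := fun j => Finset.univ.filter (fun r => j ∈ route r))
    (Finset.mem_filter.2 ⟨Finset.mem_univ r₀, hj₀⟩)
    ((hasDerivAt_mul_log hx₀.ne').fun_sub ((hasDerivAt_id' _).mul_const _))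
  have hV := HasDerivAt.comp_sub_const (x j₀ r₀) (x j₀ r₀) <| (sub_self (x j₀ r₀)).symm ▸
    hasDerivAt_logUtility_add_single hC_compact hC_convex hmax hq j₀
  have hB := HasDerivAt.comp_sub_const (x j₀ r₀) (x j₀ r₀) <| (sub_self (x j₀ r₀)).symm ▸
    hasDerivAt_sum_apply_add_single (F := fun _ y => y * log y) (hasDerivAt_mul_log (hq j₀).ne')
  refine (((hA.fun_add hV).fun_sub hB).congr_of_eventuallyEq ?_).congr_deriv ?_
  · filter_upwards [lt_mem_nhds hx₀] with h hh
    have hxh : ∀ r, ∀ j ∈ route r, 0 < if j = j₀ ∧ r = r₀ then h else x j r := fun r j hj => by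
      split_ifs
      exacts [hh, hx r j hj]
    have hqh := qOf_pos hcover hxh
    rw [Hfun_eq_of_pos habar_pos hxh hqh ((hmax _ hqh).1.2), qOf_ite hj₀]
  · rw [log_div (by positivity) (by have := hq j₀; have := habar_pos r₀; positivity),
      log_mul hx₀.ne' hσ.ne', log_mul (hq j₀).ne' (habar_pos r₀).ne']
    ring

/-- Partial derivatives of the entropy Lyapunov function `H`: for `x`
positive on `E` and `(j₀, r₀) ∈ E`,
`∂H/∂x_{j₀ r₀}(x) = log (x_{j₀ r₀} σ*_{j₀}(q) / (q_{j₀} ā_{r₀}))`. -/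
theorem H_partial_deriv {J R : Type} [Fintype J] [Fintype R]
    [Nonempty J] [Nonempty R]
    (route : R → Finset J) (hroute_ne : ∀ r, (route r).Nonempty)
    (hcover : ∀ j, ∃ r, j ∈ route r)
    (abar : R → ℝ) (habar_pos : ∀ r, 0 < abar r)
    (C : Set (J → ℝ)) (hC_compact : IsCompact C) (hC_convex : Convex ℝ C)
    (hC_int : (interior C).Nonempty) (hC_nonneg : ∀ s ∈ C, ∀ j, 0 ≤ s j)
    (habarJ_int :
      (fun j => ∑ r ∈ Finset.univ.filter (fun r => j ∈ route r), abar r) ∈ interior C)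
    (sstar : (J → ℝ) → J → ℝ)
    (hsstar : ∀ q : J → ℝ, (∀ j, 0 ≤ q j) → q ≠ 0 →
      sstar q ∈ C ∧ (∀ j, 0 < q j → 0 < sstar q j) ∧
      ∀ s ∈ C, (∀ j, 0 < q j → 0 < s j) →
        ∑ j ∈ Finset.univ.filter (fun j => 0 < q j), q j * Real.log (s j)
          ≤ ∑ j ∈ Finset.univ.filter (fun j => 0 < q j), q j * Real.log (sstar q j))
    (x : J → R → ℝ) (hx : ∀ r, ∀ j ∈ route r, 0 < x j r)
    (j₀ : J) (r₀ : R) (hj₀ : j₀ ∈ route r₀) :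
    HasDerivAt
      (fun h : ℝ =>
        Hfun route abar sstar (fun j r => if j = j₀ ∧ r = r₀ then h else x j r))
      (Real.log (x j₀ r₀ * sstar (qOf route x) j₀ / (qOf route x j₀ * abar r₀)))
      (x j₀ r₀) :=
  H_partial_deriv_general route hcover abar habar_pos C hC_compact hC_convex sstar hsstar x hx j₀ r₀
    hj₀
end

section
/- H(x) ≥ 0 for every x ∈ [0,∞)^E; H(x) = 0 if and only if x = 0; and sup{ H(x) : x ∈ [0,∞)^E, ‖x‖₁ = 1 } < ∞. -/
/-!
Since `ā` is an interior point of `C`, some dilate `(1 + ε) • ā` still lies in `C`. On each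
link, the log-sum (Gibbs) inequality bounds the inner sum of `H` below by `q_j log (σ*_j / ā_j)`,
and maximality of `σ*(q)` against the competitor `(1 + ε) • ā` then gives
`H(x) ≥ log (1 + ε) · ‖x‖₁`, whence nonnegativity and the characterisation of the zero set.
Conversely, `x_{jr} ≤ q_j` and `σ*(q)` ranges in the bounded set `C`, so every logarithm in `H`
is bounded above uniformly, which bounds `H` on the unit sphere.
-/

open scoped Classical

open Finset Real

lemma sub_le_mul_log_div {t c : ℝ} (ht : 0 ≤ t) (hc : 0 < c) : t - c ≤ t * log (t / c) :=
  calc t - c = c * (t / c - 1) := by field_simp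
    _ ≤ c * (t / c * log (t / c)) :=
      mul_le_mul_of_nonneg_left (self_sub_one_le_mul_log (div_nonneg ht hc.le)) hc.le
    _ = t * log (t / c) := by field_simp

lemma sum_mul_log_div_nonneg {ι : Type*} {s : Finset ι} {x c : ι → ℝ}
    (hx : ∀ i ∈ s, 0 ≤ x i) (hc : ∀ i ∈ s, 0 < c i) (hsum : ∑ i ∈ s, x i = ∑ i ∈ s, c i) :
    0 ≤ ∑ i ∈ s, x i * log (x i / c i) :=
  calc (0 : ℝ) = ∑ i ∈ s, (x i - c i) := by rw [sum_sub_distrib, hsum, sub_self]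
    _ ≤ ∑ i ∈ s, x i * log (x i / c i) :=
      sum_le_sum fun i hi => sub_le_mul_log_div (hx i hi) (hc i hi)

lemma mul_log_div_sum_le_sum_mul_log {ι : Type*} {s : Finset ι} {x w : ι → ℝ} {σ : ℝ}
    (hx : ∀ i ∈ s, 0 ≤ x i) (hw : ∀ i ∈ s, 0 < w i) (hσ : 0 < σ) (hQ : 0 < ∑ i ∈ s, x i) :
    (∑ i ∈ s, x i) * log (σ / ∑ i ∈ s, w i)
      ≤ ∑ i ∈ s, x i * log (x i * σ / ((∑ i ∈ s, x i) * w i)) := by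
  set Q := ∑ i ∈ s, x i
  set A := ∑ i ∈ s, w i
  have hA : 0 < A := sum_pos hw (nonempty_of_sum_ne_zero hQ.ne')
  -- Gibbs against the reference masses `Q * w i / A`, which have the same total `Q`.
  have hgibbs : 0 ≤ ∑ i ∈ s, x i * log (x i / (Q * w i / A)) := by
    refine sum_mul_log_div_nonneg hx (fun i hi => by have := hw i hi; positivity) ?_
    rw [← sum_div, ← mul_sum]
    exact (mul_div_cancel_right₀ Q hA.ne').symm
  have hsplit : ∀ i ∈ s, x i * log (x i * σ / (Q * w i))
      = x i * log (x i / (Q * w i / A)) + x i * log (σ / A) := by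
    intro i hi
    rcases (hx i hi).eq_or_lt with h0 | h0
    · simp [← h0]
    · have := hw i hi
      rw [← mul_add, ← log_mul (by positivity) (by positivity)]
      congr 2
      field_simp
  rw [sum_congr rfl hsplit, sum_add_distrib, ← sum_mul]
  linarith

lemma exists_one_add_smul_mem_of_mem_interior {E : Type*} [AddCommGroup E] [Module ℝ E]
    [TopologicalSpace E] [ContinuousSMul ℝ E] {C : Set E} {a : E} (ha : a ∈ interior C) :
    ∃ ε : ℝ, 0 < ε ∧ (1 + ε) • a ∈ C := by
  have hlim : Filter.Tendsto (fun t : ℝ => (1 + t) • a) (nhdsWithin 0 (Set.Ioi 0)) (nhds a) := by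
    have hcont : Continuous fun t : ℝ => (1 + t) • a := by fun_prop
    simpa using (hcont.tendsto 0).mono_left nhdsWithin_le_nhds
  obtain ⟨ε, hεC, hε⟩ :=
    ((hlim.eventually (isOpen_interior.mem_nhds ha)).and self_mem_nhdsWithin).exists
  exact ⟨ε, hε, interior_subset hεC⟩

section Network

variable {J R : Type} [Fintype R] {route : R → Finset J}

variable (route) in
noncomputable def linkRate (abar : R → ℝ) (j : J) : ℝ :=
  ∑ r ∈ univ.filter (fun r => j ∈ route r), abar r

def IsLogUtilityMaximizer [Fintype J] (C : Set (J → ℝ)) (q σ : J → ℝ) : Prop :=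
  σ ∈ C ∧ (∀ j, 0 < q j → 0 < σ j) ∧
    ∀ s ∈ C, (∀ j, 0 < q j → 0 < s j) →
      ∑ j ∈ univ.filter (fun j => 0 < q j), q j * log (s j)
        ≤ ∑ j ∈ univ.filter (fun j => 0 < q j), q j * log (σ j)

lemma IsLogUtilityMaximizer.sum_mul_log_le [Fintype J] {C : Set (J → ℝ)} {q σ s : J → ℝ}
    (h : IsLogUtilityMaximizer C q σ) (hq : ∀ j, 0 ≤ q j) (hs : s ∈ C)
    (hs_pos : ∀ j, 0 < q j → 0 < s j) :
    ∑ j, q j * log (s j) ≤ ∑ j, q j * log (σ j) := by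
  have hfull : ∀ f : J → ℝ, ∑ j ∈ univ.filter (fun j => 0 < q j), q j * f j = ∑ j, q j * f j :=
    fun f => sum_filter_of_ne fun j _ hne => (hq j).lt_of_ne' (left_ne_zero_of_mul hne)
  simpa only [hfull] using h.2.2 s hs hs_pos

variable {x : J → R → ℝ}

lemma qOf_nonneg (hx : ∀ r, ∀ j ∈ route r, 0 ≤ x j r) (j : J) : 0 ≤ qOf route x j :=
  sum_nonneg fun r hr => hx r j (by simpa using hr)

lemma qOf_eq_zero_iff (hx : ∀ r, ∀ j ∈ route r, 0 ≤ x j r) {j : J} :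
    qOf route x j = 0 ↔ ∀ r, j ∈ route r → x j r = 0 := by
  rw [qOf, sum_eq_zero_iff_of_nonneg fun r hr => hx r j (by simpa using hr)]
  simp

lemma sum_qOf_eq_zero_iff [Fintype J] (hx : ∀ r, ∀ j ∈ route r, 0 ≤ x j r) :
    ∑ j, qOf route x j = 0 ↔ ∀ r, ∀ j ∈ route r, x j r = 0 := by
  rw [sum_eq_zero_iff_of_nonneg fun j _ => qOf_nonneg hx j]
  simp only [mem_univ, true_implies, qOf_eq_zero_iff hx]
  exact forall_comm

lemma linkRate_pos_of_qOf_pos {abar : R → ℝ} (habar : ∀ r, 0 < abar r) {j : J}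
    (hq : 0 < qOf route x j) : 0 < linkRate route abar j :=
  sum_pos (fun r _ => habar r) (nonempty_of_sum_ne_zero hq.ne')

variable [Fintype J] {abar : R → ℝ} {sstar : (J → ℝ) → J → ℝ}

lemma Hfun_eq_zero_of_forall_eq_zero (h : ∀ r, ∀ j ∈ route r, x j r = 0) :
    Hfun route abar sstar x = 0 :=
  sum_eq_zero fun j _ => sum_eq_zero fun r hr => by rw [h r j (by simpa using hr), zero_mul]

lemma sum_mul_log_div_linkRate_le_Hfun (habar : ∀ r, 0 < abar r)
    (hx : ∀ r, ∀ j ∈ route r, 0 ≤ x j r)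
    (hσ : ∀ j, 0 < qOf route x j → 0 < sstar (qOf route x) j) :
    ∑ j, qOf route x j * log (sstar (qOf route x) j / linkRate route abar j)
      ≤ Hfun route abar sstar x := by
  refine sum_le_sum fun j _ => ?_
  rcases (qOf_nonneg hx j).eq_or_lt with hq | hq
  · rw [← hq, zero_mul]
    refine sum_nonneg fun r hr => ?_
    rw [(qOf_eq_zero_iff hx).1 hq.symm r (by simpa using hr), zero_mul]
  · exact mul_log_div_sum_le_sum_mul_log (fun r hr => hx r j (by simpa using hr))
      (fun r _ => habar r) (hσ j hq) hq

lemma log_one_add_mul_sum_qOf_le_Hfun (habar : ∀ r, 0 < abar r) {C : Set (J → ℝ)}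
    (hsstar : ∀ q : J → ℝ, (∀ j, 0 ≤ q j) → q ≠ 0 → IsLogUtilityMaximizer C q (sstar q))
    {ε : ℝ} (hε : 0 < ε) (hεC : (1 + ε) • linkRate route abar ∈ C)
    (hx : ∀ r, ∀ j ∈ route r, 0 ≤ x j r) :
    log (1 + ε) * ∑ j, qOf route x j ≤ Hfun route abar sstar x := by
  set q := qOf route x
  by_cases hq0 : q = 0
  · rw [Hfun_eq_zero_of_forall_eq_zero ((sum_qOf_eq_zero_iff hx).1 (by simp [q, hq0]))]
    simp [q, hq0]
  have hσ := hsstar q (qOf_nonneg hx) hq0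
  have hpos : ∀ j, q j ≠ 0 → 0 < q j := fun j hj => (qOf_nonneg hx j).lt_of_ne' hj
  have hε1 : (0 : ℝ) < 1 + ε := by linarith
  have hmax := hσ.sum_mul_log_le (qOf_nonneg hx) hεC fun j hj => by
    simpa using mul_pos hε1 (linkRate_pos_of_qOf_pos habar hj)
  calc log (1 + ε) * ∑ j, q j
      = ∑ j, q j * log (((1 + ε) • linkRate route abar) j)
          - ∑ j, q j * log (linkRate route abar j) := by
        rw [mul_comm, sum_mul, ← sum_sub_distrib]
        refine sum_congr rfl fun j _ => ?_
        by_cases hj : q j = 0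
        · simp [hj]
        rw [Pi.smul_apply, smul_eq_mul, log_mul hε1.ne'
          (linkRate_pos_of_qOf_pos habar (hpos j hj)).ne']
        ring
    _ ≤ ∑ j, q j * log (sstar q j) - ∑ j, q j * log (linkRate route abar j) :=
        sub_le_sub_right hmax _
    _ = ∑ j, q j * log (sstar q j / linkRate route abar j) := by
        rw [← sum_sub_distrib]
        refine sum_congr rfl fun j _ => ?_
        by_cases hj : q j = 0
        · simp [hj]
        rw [log_div (hσ.2.1 j (hpos j hj)).ne' (linkRate_pos_of_qOf_pos habar (hpos j hj)).ne']
        ring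
    _ ≤ Hfun route abar sstar x :=
        sum_mul_log_div_linkRate_le_Hfun habar hx hσ.2.1

lemma Hfun_le_mul_sum_qOf (habar : ∀ r, 0 < abar r) (hx : ∀ r, ∀ j ∈ route r, 0 ≤ x j r)
    {S B : ℝ}
    (hσ : ∀ j, 0 < qOf route x j → 0 < sstar (qOf route x) j ∧ sstar (qOf route x) j ≤ S)
    (hB : ∀ r, -log (abar r) ≤ B) :
    Hfun route abar sstar x ≤ (log S + B) * ∑ j, qOf route x j := by
  rw [mul_sum]
  refine sum_le_sum fun j _ => ?_
  refine (sum_le_sum fun r hr => ?_).trans_eq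
    (mul_sum (univ.filter fun r => j ∈ route r) (x j) (log S + B)).symm
  have hjr : j ∈ route r := by simpa using hr
  rcases (hx r j hjr).eq_or_lt with h0 | h0
  · simp [← h0]
  have hle : x j r ≤ qOf route x j :=
    single_le_sum (fun r hr => hx r j (by simpa using hr)) hr
  have hq : 0 < qOf route x j := h0.trans_le hle
  obtain ⟨hσ0, hσS⟩ := hσ j hq
  have hsplit : log (x j r * sstar (qOf route x) j / (qOf route x j * abar r))
      = log (x j r / qOf route x j) + log (sstar (qOf route x) j) - log (abar r) := by
    rw [show x j r * sstar (qOf route x) j / (qOf route x j * abar r)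
        = x j r / qOf route x j * sstar (qOf route x) j / abar r by ring,
      log_div (by positivity) (habar r).ne', log_mul (by positivity) hσ0.ne']
  have hratio : log (x j r / qOf route x j) ≤ 0 :=
    log_nonpos (by positivity) ((div_le_one hq).2 hle)
  rw [hsplit, mul_comm (log S + B)]
  exact mul_le_mul_of_nonneg_left (by linarith [log_le_log hσ0 hσS, hB r]) h0.le

end Network

theorem H_nonneg_zero_iff_bounded_general {J R : Type} [Fintype J] [Fintype R]
    (route : R → Finset J)
    (abar : R → ℝ) (habar_pos : ∀ r, 0 < abar r)
    (C : Set (J → ℝ)) (hC_compact : IsCompact C)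
    (habarJ_int :
      (fun j => ∑ r ∈ Finset.univ.filter (fun r => j ∈ route r), abar r) ∈ interior C)
    (sstar : (J → ℝ) → J → ℝ)
    (hsstar : ∀ q : J → ℝ, (∀ j, 0 ≤ q j) → q ≠ 0 →
      sstar q ∈ C ∧ (∀ j, 0 < q j → 0 < sstar q j) ∧
      ∀ s ∈ C, (∀ j, 0 < q j → 0 < s j) →
        ∑ j ∈ Finset.univ.filter (fun j => 0 < q j), q j * Real.log (s j)
          ≤ ∑ j ∈ Finset.univ.filter (fun j => 0 < q j), q j * Real.log (sstar q j)) :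
    (∀ x : J → R → ℝ, (∀ r, ∀ j ∈ route r, 0 ≤ x j r) →
      0 ≤ Hfun route abar sstar x) ∧
    (∀ x : J → R → ℝ, (∀ r, ∀ j ∈ route r, 0 ≤ x j r) →
      (Hfun route abar sstar x = 0 ↔ ∀ r, ∀ j ∈ route r, x j r = 0)) ∧
    (∃ M : ℝ, ∀ x : J → R → ℝ, (∀ r, ∀ j ∈ route r, 0 ≤ x j r) →
      (∑ j, ∑ r ∈ Finset.univ.filter (fun r => j ∈ route r), x j r) = 1 →
      Hfun route abar sstar x ≤ M) := by
  obtain ⟨ε, hε, hεC⟩ := exists_one_add_smul_mem_of_mem_interior habarJ_int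
  have hlog : 0 < log (1 + ε) := log_pos (by linarith)
  have hlower : ∀ x : J → R → ℝ, (∀ r, ∀ j ∈ route r, 0 ≤ x j r) →
      log (1 + ε) * ∑ j, qOf route x j ≤ Hfun route abar sstar x :=
    fun x hx => log_one_add_mul_sum_qOf_le_Hfun habar_pos hsstar hε hεC hx
  refine ⟨fun x hx => ?_, fun x hx => ⟨fun hH => ?_, Hfun_eq_zero_of_forall_eq_zero⟩, ?_⟩
  · exact (mul_nonneg hlog.le (sum_nonneg fun j _ => qOf_nonneg hx j)).trans (hlower x hx)
  · have hsum_nonpos : ∑ j, qOf route x j ≤ 0 :=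
      nonpos_of_mul_nonpos_right (hH ▸ hlower x hx) hlog
    exact (sum_qOf_eq_zero_iff hx).1
      (le_antisymm hsum_nonpos (sum_nonneg fun j _ => qOf_nonneg hx j))
  · obtain ⟨S, hS⟩ := isBounded_iff_forall_norm_le.1 hC_compact.isBounded
    obtain ⟨B, hB⟩ := Finite.bddAbove_range fun r => -log (abar r)
    refine ⟨log S + B, fun x hx hx1 => ?_⟩
    have hσ : ∀ j, 0 < qOf route x j →
        0 < sstar (qOf route x) j ∧ sstar (qOf route x) j ≤ S := by
      intro j hj
      obtain ⟨hσC, hσpos, -⟩ := hsstar _ (qOf_nonneg hx) fun h => hj.ne' (congrFun h j)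
      exact ⟨hσpos j hj, (le_norm_self _).trans ((norm_le_pi_norm _ j).trans (hS _ hσC))⟩
    simpa [qOf, hx1] using Hfun_le_mul_sum_qOf habar_pos hx hσ fun r => hB ⟨r, rfl⟩

/-- The entropy Lyapunov function `H` is nonnegative on `[0,∞)^E`, vanishes
exactly at `x = 0`, and is bounded above on the unit `L¹`-sphere of `[0,∞)^E`. -/
theorem H_nonneg_zero_iff_bounded {J R : Type} [Fintype J] [Fintype R]
    [Nonempty J] [Nonempty R]
    (route : R → Finset J) (hroute_ne : ∀ r, (route r).Nonempty)
    (hcover : ∀ j, ∃ r, j ∈ route r)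
    (abar : R → ℝ) (habar_pos : ∀ r, 0 < abar r)
    (C : Set (J → ℝ)) (hC_compact : IsCompact C) (hC_convex : Convex ℝ C)
    (hC_int : (interior C).Nonempty) (hC_nonneg : ∀ s ∈ C, ∀ j, 0 ≤ s j)
    (habarJ_int :
      (fun j => ∑ r ∈ Finset.univ.filter (fun r => j ∈ route r), abar r) ∈ interior C)
    (sstar : (J → ℝ) → J → ℝ)
    (hsstar : ∀ q : J → ℝ, (∀ j, 0 ≤ q j) → q ≠ 0 →
      sstar q ∈ C ∧ (∀ j, 0 < q j → 0 < sstar q j) ∧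
      ∀ s ∈ C, (∀ j, 0 < q j → 0 < s j) →
        ∑ j ∈ Finset.univ.filter (fun j => 0 < q j), q j * Real.log (s j)
          ≤ ∑ j ∈ Finset.univ.filter (fun j => 0 < q j), q j * Real.log (sstar q j)) :
    (∀ x : J → R → ℝ, (∀ r, ∀ j ∈ route r, 0 ≤ x j r) →
      0 ≤ Hfun route abar sstar x) ∧
    (∀ x : J → R → ℝ, (∀ r, ∀ j ∈ route r, 0 ≤ x j r) →
      (Hfun route abar sstar x = 0 ↔ ∀ r, ∀ j ∈ route r, x j r = 0)) ∧
    (∃ M : ℝ, ∀ x : J → R → ℝ, (∀ r, ∀ j ∈ route r, 0 ≤ x j r) →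
      (∑ j, ∑ r ∈ Finset.univ.filter (fun r => j ∈ route r), x j r) = 1 →
      Hfun route abar sstar x ≤ M) :=
  H_nonneg_zero_iff_bounded_general route abar habar_pos C hC_compact habarJ_int sstar hsstar
end

section
/- For every x ∈ (0,∞)^E, H(x) = Σ_{j∈𝒥} q_j · D( (x_{jr}/q_j)_{r ∋ j} ‖ (ā_r/ā_j)_{r ∋ j} ) + Σ_{j∈𝒥} q_j log( σ*_j(q) / ā_j ). (Relative-entropy decomposition of the Lyapunov function H.) -/
open scoped Classical

/-!
On link `j`, with `A = āⱼ`, each factor `x σ / (q a)` inside the logarithm of `H` splits as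
`((x / q) / (a / A)) * (σ / A)`. Summing over the routes through `j` and using `∑_{r ∋ j} x_{jr} = qⱼ`,
the first factor gives the relative entropy term and the second `qⱼ log (σ*ⱼ / āⱼ)`. Splitting the
logarithm needs every factor nonzero: `qⱼ > 0` since some route crosses `j`, and then `σ*ⱼ > 0`
because the optimality property of `σ*` forces it on links with positive queue.
-/

open Finset Real

theorem mul_log_div_eq_mul_add {x q a A σ : ℝ} (hq : q ≠ 0) (ha : a ≠ 0) (hA : A ≠ 0)
    (hσ : σ ≠ 0) :
    x * log (x * σ / (q * a)) = q * (x / q * log (x / q / (a / A))) + x * log (σ / A) := by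
  rcases eq_or_ne x 0 with rfl | hx
  · simp
  have hsplit : x * σ / (q * a) = x / q / (a / A) * (σ / A) := by field_simp
  rw [hsplit, log_mul (by positivity) (by positivity), ← mul_assoc, mul_div_cancel₀ x hq,
    mul_add]

/-- Chain rule for relative entropy, in unnormalized form. -/
theorem sum_mul_log_div_eq_mul_sum_add {ι : Type*} (s : Finset ι) (x a : ι → ℝ) {σ : ℝ}
    (hq : ∑ i ∈ s, x i ≠ 0) (ha : ∀ i ∈ s, a i ≠ 0) (hA : ∑ i ∈ s, a i ≠ 0) (hσ : σ ≠ 0) :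
    ∑ i ∈ s, x i * log (x i * σ / ((∑ k ∈ s, x k) * a i))
      = (∑ k ∈ s, x k) * ∑ i ∈ s, x i / (∑ k ∈ s, x k) *
            log (x i / (∑ k ∈ s, x k) / (a i / ∑ k ∈ s, a k))
        + (∑ k ∈ s, x k) * log (σ / ∑ k ∈ s, a k) := by
  rw [mul_sum, sum_mul, ← sum_add_distrib]
  exact sum_congr rfl fun i hi => mul_log_div_eq_mul_add hq (ha i hi) hA hσ

theorem sum_routes_through_pos {J R : Type} [Fintype R] {route : R → Finset J} {j : J}
    {f : R → ℝ} (hj : ∃ r, j ∈ route r) (hf : ∀ r, j ∈ route r → 0 < f r) :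
    0 < ∑ r ∈ univ.filter (fun r => j ∈ route r), f r := by
  obtain ⟨r, hr⟩ := hj
  exact sum_pos' (fun r hr => (hf r (mem_filter.1 hr).2).le) ⟨r, by simpa using hr, hf r hr⟩

theorem H_relative_entropy_decomposition_general {J R : Type} [Fintype J] [Fintype R]
    (route : R → Finset J)
    (hcover : ∀ j, ∃ r, j ∈ route r)
    (abar : R → ℝ) (habar_pos : ∀ r, 0 < abar r)
    (C : Set (J → ℝ))
    (sstar : (J → ℝ) → J → ℝ)
    (hsstar : ∀ q : J → ℝ, (∀ j, 0 ≤ q j) → q ≠ 0 →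
      sstar q ∈ C ∧ (∀ j, 0 < q j → 0 < sstar q j) ∧
      ∀ s ∈ C, (∀ j, 0 < q j → 0 < s j) →
        ∑ j ∈ Finset.univ.filter (fun j => 0 < q j), q j * Real.log (s j)
          ≤ ∑ j ∈ Finset.univ.filter (fun j => 0 < q j), q j * Real.log (sstar q j))
    (x : J → R → ℝ) (hx : ∀ r, ∀ j ∈ route r, 0 < x j r) :
    Hfun route abar sstar x
      = (∑ j, qOf route x j *
          (∑ r ∈ Finset.univ.filter (fun r => j ∈ route r),
            (x j r / qOf route x j) *
              Real.log ((x j r / qOf route x j) /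
                (abar r / ∑ r' ∈ Finset.univ.filter (fun r' => j ∈ route r'), abar r'))))
        + ∑ j, qOf route x j *
            Real.log (sstar (qOf route x) j /
              (∑ r' ∈ Finset.univ.filter (fun r' => j ∈ route r'), abar r')) := by
  have hq : ∀ j, 0 < qOf route x j := fun j => sum_routes_through_pos (hcover j) (hx · j)
  have hσ : ∀ j, 0 < sstar (qOf route x) j := fun j =>
    (hsstar _ (fun k => (hq k).le) fun h => (hq j).ne' (congrFun h j)).2.1 j (hq j)
  unfold Hfun
  rw [← sum_add_distrib]
  exact sum_congr rfl fun j _ =>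
    sum_mul_log_div_eq_mul_sum_add _ (x j) abar (hq j).ne' (fun r _ => (habar_pos r).ne')
      (sum_routes_through_pos (hcover j) fun r _ => habar_pos r).ne' (hσ j).ne'

/-- Relative-entropy decomposition of the Lyapunov function `H`: for `x`
positive on `E`,
`H(x) = ∑ⱼ qⱼ D((x_{jr}/qⱼ)_r ‖ (ā_r/āⱼ)_r) + ∑ⱼ qⱼ log (σ*ⱼ(q)/āⱼ)`. -/
theorem H_relative_entropy_decomposition {J R : Type} [Fintype J] [Fintype R]
    [Nonempty J] [Nonempty R]
    (route : R → Finset J) (hroute_ne : ∀ r, (route r).Nonempty)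
    (hcover : ∀ j, ∃ r, j ∈ route r)
    (abar : R → ℝ) (habar_pos : ∀ r, 0 < abar r)
    (C : Set (J → ℝ)) (hC_compact : IsCompact C) (hC_convex : Convex ℝ C)
    (hC_int : (interior C).Nonempty) (hC_nonneg : ∀ s ∈ C, ∀ j, 0 ≤ s j)
    (habarJ_int :
      (fun j => ∑ r ∈ Finset.univ.filter (fun r => j ∈ route r), abar r) ∈ interior C)
    (sstar : (J → ℝ) → J → ℝ)
    (hsstar : ∀ q : J → ℝ, (∀ j, 0 ≤ q j) → q ≠ 0 →
      sstar q ∈ C ∧ (∀ j, 0 < q j → 0 < sstar q j) ∧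
      ∀ s ∈ C, (∀ j, 0 < q j → 0 < s j) →
        ∑ j ∈ Finset.univ.filter (fun j => 0 < q j), q j * Real.log (s j)
          ≤ ∑ j ∈ Finset.univ.filter (fun j => 0 < q j), q j * Real.log (sstar q j))
    (x : J → R → ℝ) (hx : ∀ r, ∀ j ∈ route r, 0 < x j r) :
    Hfun route abar sstar x
      = (∑ j, qOf route x j *
          (∑ r ∈ Finset.univ.filter (fun r => j ∈ route r),
            (x j r / qOf route x j) *
              Real.log ((x j r / qOf route x j) /
                (abar r / ∑ r' ∈ Finset.univ.filter (fun r' => j ∈ route r'), abar r'))))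
        + ∑ j, qOf route x j *
            Real.log (sstar (qOf route x) j /
              (∑ r' ∈ Finset.univ.filter (fun r' => j ∈ route r'), abar r')) :=
  H_relative_entropy_decomposition_general route hcover abar habar_pos C sstar hsstar x hx
end

section
/- There exists δ > 0 such that for every q ∈ [0,∞)^𝒥 with q ≠ 0 and every s* ∈ C maximizing Σ_{j : q_j > 0} q_j log s_j over s ∈ C, there exists j ∈ 𝒥 with s*_j ≥ b_j + δ. (Uniform Pareto gap: every proportionally fair allocation strictly exceeds an interior load vector in some coordinate.) -/
open scoped Classical

open Topology

/-! Since `b` is interior, `b + δ • 1 ∈ C` for some `δ > 0`. An allocation lying strictly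
below `b + δ • 1` on the support of `q` would then be beaten by it, as `log` is strictly
increasing. -/

theorem exists_pos_add_smul_mem_of_mem_interior {E : Type*} [AddCommGroup E] [Module ℝ E]
    [TopologicalSpace E] [ContinuousAdd E] [ContinuousSMul ℝ E] {C : Set E} {b : E}
    (hb : b ∈ interior C) (v : E) : ∃ δ > (0 : ℝ), b + δ • v ∈ C := by
  have hnear : ∀ᶠ t in 𝓝 (0 : ℝ), b + t • v ∈ C := by
    have hcont : Continuous fun t : ℝ => b + t • v := by fun_prop
    refine hcont.continuousAt.preimage_mem_nhds ?_
    simpa using mem_interior_iff_mem_nhds.mp hb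
  obtain ⟨δ, hδC, hδpos⟩ := ((hnear.filter_mono nhdsWithin_le_nhds).and
    (self_mem_nhdsWithin : Set.Ioi (0 : ℝ) ∈ 𝓝[>] 0)).exists
  exact ⟨δ, hδpos, hδC⟩

theorem Finset.sum_mul_log_lt_sum_mul_log {ι : Type*} {s : Finset ι} {w x y : ι → ℝ}
    (hs : s.Nonempty) (hw : ∀ j ∈ s, 0 < w j) (hx : ∀ j ∈ s, 0 < x j)
    (hxy : ∀ j ∈ s, x j < y j) :
    ∑ j ∈ s, w j * Real.log (x j) < ∑ j ∈ s, w j * Real.log (y j) :=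
  Finset.sum_lt_sum_of_nonempty hs fun j hj =>
    mul_lt_mul_of_pos_left (Real.log_lt_log (hx j hj) (hxy j hj)) (hw j hj)

theorem proportional_fair_pareto_gap_general {J : Type} [Fintype J]
    (C : Set (J → ℝ))
    (b : J → ℝ) (hb : b ∈ interior C) :
    ∃ δ > (0 : ℝ), ∀ q : J → ℝ, (∀ j, 0 ≤ q j) → q ≠ 0 →
      ∀ sstar ∈ C, (∀ j, 0 < q j → 0 < sstar j) →
        (∀ s ∈ C, (∀ j, 0 < q j → 0 < s j) →
          ∑ j ∈ Finset.univ.filter (fun j => 0 < q j), q j * Real.log (s j)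
            ≤ ∑ j ∈ Finset.univ.filter (fun j => 0 < q j), q j * Real.log (sstar j)) →
        ∃ j, b j + δ ≤ sstar j := by
  obtain ⟨δ, hδ, hbδC⟩ := exists_pos_add_smul_mem_of_mem_interior hb 1
  refine ⟨δ, hδ, fun q hq hq0 sstar _ hspos hmax => ?_⟩
  by_contra! hbelow
  have hsupport : (Finset.univ.filter fun j => 0 < q j).Nonempty := by
    obtain ⟨j, hj⟩ := Function.ne_iff.mp hq0
    exact ⟨j, Finset.mem_filter.mpr ⟨Finset.mem_univ j, (hq j).lt_of_ne' hj⟩⟩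
  have hadm : ∀ j, 0 < q j → 0 < (b + δ • 1) j := fun j hj => by
    simpa using (hspos j hj).trans (hbelow j)
  have hlt := Finset.sum_mul_log_lt_sum_mul_log (y := b + δ • 1) hsupport
    (fun j hj => (Finset.mem_filter.mp hj).2) (fun j hj => hspos j (Finset.mem_filter.mp hj).2)
    (fun j _ => by simpa using hbelow j)
  exact (hmax _ hbδC hadm).not_gt hlt

/-- Uniform Pareto gap: there is a `δ > 0` such that every proportionally fair
allocation (a maximizer of `∑_{j : qⱼ > 0} qⱼ log sⱼ` over `C`) exceeds the
interior load vector `b` by at least `δ` in some coordinate. -/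
theorem proportional_fair_pareto_gap {J : Type} [Fintype J] [Nonempty J]
    (C : Set (J → ℝ)) (hC_compact : IsCompact C) (hC_convex : Convex ℝ C)
    (hC_int : (interior C).Nonempty) (hC_nonneg : ∀ s ∈ C, ∀ j, 0 ≤ s j)
    (b : J → ℝ) (hb : b ∈ interior C) :
    ∃ δ > (0 : ℝ), ∀ q : J → ℝ, (∀ j, 0 ≤ q j) → q ≠ 0 →
      ∀ sstar ∈ C, (∀ j, 0 < q j → 0 < sstar j) →
        (∀ s ∈ C, (∀ j, 0 < q j → 0 < s j) →
          ∑ j ∈ Finset.univ.filter (fun j => 0 < q j), q j * Real.log (s j)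
            ≤ ∑ j ∈ Finset.univ.filter (fun j => 0 < q j), q j * Real.log (sstar j)) →
        ∃ j, b j + δ ≤ sstar j :=
  proportional_fair_pareto_gap_general C b hb
end
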